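/- arXiv:1110.1986 — 9 statements merged into one kernel-verified Lean document; each statement's English description precedes it below -/
import Mathlib

section
/- Let G and G' be two regression graphs on the same finite node set N having the same skeleton (i.e., the same set of unordered node pairs joined by an edge, irrespective of edge type). Then G and G' are Markov equivalent — that is, for all disjoint subsets a, b, c of N, G has no active path between a and b given c exactly when G' has none — if and only if G and G' have identical sets of collision V-configurations. -/
/-- A regression graph on node set `N`: the nodes are partitioned into ordered
connected components (indexed by `comp`), response components coming before
(i.e. having smaller index than) context components; dashed lines join distinct
response nodes in a common component, full lines join distinct context nodes in
a common component, and an arrow `i ⟵ k` (recorded as `arrow i k`) points from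
a node `k` in a strictly later component to a response node `i`. -/
structure RegressionGraph (N : Type) where
  /-- index of the connected component of a node (smaller = earlier) -/
  comp : N → ℕ
  /-- whether a node is a context node -/
  isContext : N → Prop
  /-- dashed lines (joint responses) -/
  dashed : N → N → Prop
  /-- full lines (context variables) -/
  full : N → N → Prop
  /-- `arrow i k` : an arrow `i ⟵ k` pointing from `k` to the response node `i` -/
  arrow : N → N → Prop
  dashed_symm : ∀ i k, dashed i k → dashed k i
  full_symm : ∀ i k, full i k → full k i
  dashed_ne : ∀ i k, dashed i k → i ≠ k
  full_ne : ∀ i k, full i k → i ≠ k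
  dashed_resp : ∀ i k, dashed i k → ¬ isContext i ∧ ¬ isContext k ∧ comp i = comp k
  full_ctx : ∀ i k, full i k → isContext i ∧ isContext k ∧ comp i = comp k
  arrow_resp : ∀ i k, arrow i k → ¬ isContext i ∧ comp i < comp k
  context_last : ∀ i k, ¬ isContext i → isContext k → comp i < comp k

namespace RegressionGraph

variable {N : Type} (G : RegressionGraph N)

/-- Two nodes are adjacent (coupled) if they are joined by one of the three types of edge. -/
def Adj (i k : N) : Prop :=
  G.dashed i k ∨ G.full i k ∨ G.arrow i k ∨ G.arrow k i

/-- The edge between `x` and `o` has an arrowhead at `o`: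
it is an arrow pointing to `o` or a dashed line with endpoint `o`. -/
def ArrowheadAt (x o : N) : Prop := G.arrow o x ∨ G.dashed x o

/-- `q` is anterior to `i`: there is a direction-preserving sequence of arrows
`i ⟵ ... ⟵ p` followed by a sequence of full lines `p — ... — q`
(either part possibly empty). -/
def Anterior (i q : N) : Prop :=
  ∃ p, Relation.ReflTransGen G.arrow i p ∧ Relation.ReflTransGen G.full p q

/-- `ant c`: the nodes outside `c` that are anterior to some node of `c`. -/
def antSet (c : Set N) : Set N := {q | q ∉ c ∧ ∃ i ∈ c, G.Anterior i q}

/-- The inner node `f t` of a path `f 0, f 1, ..., f m` is a collision node: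
both adjacent edges have an arrowhead at it. -/
def IsCollisionAt (f : ℕ → N) (t : ℕ) : Prop :=
  G.ArrowheadAt (f (t - 1)) (f t) ∧ G.ArrowheadAt (f (t + 1)) (f t)

/-- `f 0, f 1, ..., f m` is an active path between `a` and `b` given `c`:
it is a path (distinct nodes, consecutive nodes coupled) with one endpoint in `a`,
the other in `b`, every inner collision node in `c ∪ ant c` and every inner
transmitting node outside `c`. -/
def IsActivePath (a b c : Set N) (f : ℕ → N) (m : ℕ) : Prop :=
  1 ≤ m ∧
  (∀ s ≤ m, ∀ t ≤ m, f s = f t → s = t) ∧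
  (∀ t < m, G.Adj (f t) (f (t + 1))) ∧
  f 0 ∈ a ∧ f m ∈ b ∧
  (∀ t, 0 < t → t < m →
    (G.IsCollisionAt f t → f t ∈ c ∪ G.antSet c) ∧
    (¬ G.IsCollisionAt f t → f t ∉ c))

/-- There is no active path between `a` and `b` given `c`. -/
def ActivePathFree (a b c : Set N) : Prop :=
  ¬ ∃ (f : ℕ → N) (m : ℕ), G.IsActivePath a b c f m

/-- `(i, o, k)` is a collision V-configuration: a three-node path whose endpoints
are uncoupled and whose two edges both have an arrowhead at the inner node `o`. -/
def IsCollisionV (i o k : N) : Prop :=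
  G.Adj i o ∧ G.Adj o k ∧ i ≠ k ∧ ¬ G.Adj i k ∧
    G.ArrowheadAt i o ∧ G.ArrowheadAt k o

/-- `(i, o, k)` is a transmitting V-configuration: a three-node path whose endpoints
are uncoupled which is not a collision V. -/
def IsTransmittingV (i o k : N) : Prop :=
  G.Adj i o ∧ G.Adj o k ∧ i ≠ k ∧ ¬ G.Adj i k ∧
    ¬ (G.ArrowheadAt i o ∧ G.ArrowheadAt k o)

end RegressionGraph

/-!
The type of an edge `x — o` of a regression graph is read off the components: it has an
arrowhead at `o` iff `o` is a response node in a component not later than that of `x`.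

If `(i, o, k)` is a collision V of `G`, the nodes anterior to `i` or `k` separate `i` from `k`
in `G`, and `o` is not among them; so if `(i, o, k)` were transmitting in `G'`, it would be an
active path of `G'` given that set.

Conversely, take an active walk of `G` (nodes may repeat) of least weight `∑ (comp + 1)`. It is
a path, and each of its triples is active in `G'` too. Unshielded triples have the same type in
both graphs. At a triple where `G'` disagrees, the walk could skip the middle node, or replace a
stretch around it by a single node of an earlier component: for a collision node in `ant c`, by
its child on an arrow chain towards `c`. Runs of collision nodes in `c` next to the stretch are
crossed by following chords to the new node, since the collision Vs along such a run are shared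
by `G'`. Either way the walk would get lighter.
-/

namespace RegressionGraph

variable {N : Type} {G G' : RegressionGraph N} {a b c : Set N} {f : ℕ → N} {m : ℕ}
  {i k o p q w x y z : N}

/-! ### Edges and anterior sets -/

theorem adj_of_arrow (h : G.arrow i k) : G.Adj i k := Or.inr (Or.inr (Or.inl h))

theorem Adj.symm (h : G.Adj i k) : G.Adj k i := by
  rcases h with h | h | h | h
  · exact Or.inl (G.dashed_symm _ _ h)
  · exact Or.inr (Or.inl (G.full_symm _ _ h))
  · exact Or.inr (Or.inr (Or.inr h))
  · exact Or.inr (Or.inr (Or.inl h))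

theorem Adj.ne (h : G.Adj i k) : i ≠ k := by
  rintro rfl
  rcases h with h | h | h | h
  · exact G.dashed_ne _ _ h rfl
  · exact G.full_ne _ _ h rfl
  · exact lt_irrefl _ (G.arrow_resp _ _ h).2
  · exact lt_irrefl _ (G.arrow_resp _ _ h).2

theorem ArrowheadAt.not_isContext (h : G.ArrowheadAt x o) : ¬ G.isContext o :=
  h.elim (fun h => (G.arrow_resp _ _ h).1) (fun h => (G.dashed_resp _ _ h).2.1)

theorem ArrowheadAt.comp_le (h : G.ArrowheadAt x o) : G.comp o ≤ G.comp x :=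
  h.elim (fun h => (G.arrow_resp _ _ h).2.le) (fun h => (G.dashed_resp _ _ h).2.2.ge)

theorem ArrowheadAt.adj (h : G.ArrowheadAt x o) : G.Adj x o :=
  h.elim (fun h => Or.inr (Or.inr (Or.inr h))) Or.inl

theorem arrowheadAt_of_arrow (h : G.arrow o x) : G.ArrowheadAt x o := Or.inl h

theorem arrowheadAt_iff (h : G.Adj x o) :
    G.ArrowheadAt x o ↔ ¬ G.isContext o ∧ G.comp o ≤ G.comp x := by
  refine ⟨fun h => ⟨h.not_isContext, h.comp_le⟩, fun ⟨ho, hle⟩ => ?_⟩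
  rcases h with h | h | h | h
  · exact Or.inr h
  · exact absurd (G.full_ctx _ _ h).2.1 ho
  · exact absurd (G.arrow_resp _ _ h).2 (by omega)
  · exact Or.inl h

theorem not_isContext_of_comp_lt (ho : ¬ G.isContext o) (hlt : G.comp x < G.comp o) :
    ¬ G.isContext x :=
  fun hx => absurd (G.context_last o x ho hx) (by omega)

theorem arrow_of_comp_lt (h : G.Adj x o) (hx : ¬ G.isContext x)
    (hlt : G.comp x < G.comp o) : G.arrow x o := by
  rcases h with h | h | h | h
  · exact absurd (G.dashed_resp _ _ h).2.2 hlt.ne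
  · exact absurd (G.full_ctx _ _ h).1 hx
  · exact h
  · exact absurd (G.arrow_resp _ _ h).2 (by omega)

theorem arrow_of_not_arrowheadAt (h : G.Adj x o) (ho : ¬ G.isContext o)
    (hxo : ¬ G.ArrowheadAt x o) : G.arrow x o := by
  have hlt : G.comp x < G.comp o := by
    by_contra hle
    exact hxo ((arrowheadAt_iff h).2 ⟨ho, by omega⟩)
  exact arrow_of_comp_lt h (not_isContext_of_comp_lt ho hlt) hlt

def AnteriorStep (G : RegressionGraph N) (x y : N) : Prop := G.arrow x y ∨ G.full x y

theorem AnteriorStep.comp_le (h : G.AnteriorStep x y) : G.comp x ≤ G.comp y :=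
  h.elim (fun h => (G.arrow_resp _ _ h).2.le) (fun h => (G.full_ctx _ _ h).2.2.le)

theorem AnteriorStep.isContext_of_symm (h : G.AnteriorStep x y) (h' : G.AnteriorStep y x) :
    G.isContext x := by
  rcases h with h | h
  · rcases h' with h' | h'
    · exact absurd (G.arrow_resp _ _ h).2 (G.arrow_resp _ _ h').2.asymm
    · exact absurd (G.full_ctx _ _ h').2.1 (G.arrow_resp _ _ h).1
  · exact (G.full_ctx _ _ h).1

theorem anteriorStep_of_not_arrowheadAt (h : G.Adj x y) (hxy : ¬ G.ArrowheadAt x y) :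
    G.AnteriorStep x y := by
  rcases h with h | h | h | h
  · exact absurd (Or.inr h) hxy
  · exact Or.inr h
  · exact Or.inl h
  · exact absurd (Or.inl h) hxy

/-- Arrows never point to context nodes, so in a chain of arrows and full lines the arrows
come first. -/
theorem anterior_iff : G.Anterior i q ↔ Relation.ReflTransGen G.AnteriorStep i q := by
  constructor
  · rintro ⟨p, h1, h2⟩
    exact Relation.ReflTransGen.trans (Relation.ReflTransGen.mono (fun _ _ => Or.inl) _ _ h1)
      (Relation.ReflTransGen.mono (fun _ _ => Or.inr) _ _ h2)
  · intro h
    induction h with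
    | refl => exact ⟨i, .refl, .refl⟩
    | @tail y q _ hstep ih =>
      obtain ⟨p, h1, h2⟩ := ih
      rcases hstep with hstep | hstep
      · rcases h2.cases_tail with rfl | ⟨_, _, hfull⟩
        · exact ⟨q, h1.tail hstep, .refl⟩
        · exact absurd (G.full_ctx _ _ hfull).2.1 (G.arrow_resp _ _ hstep).1
      · exact ⟨p, h1, h2.tail hstep⟩

theorem anterior_refl (i : N) : G.Anterior i i := ⟨i, .refl, .refl⟩

theorem Anterior.trans (h : G.Anterior i p) (h' : G.Anterior p q) : G.Anterior i q :=
  anterior_iff.2 ((anterior_iff.1 h).trans (anterior_iff.1 h'))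

theorem AnteriorStep.anterior (h : G.AnteriorStep x y) : G.Anterior x y :=
  anterior_iff.2 (.single h)

theorem anterior_of_arrow (h : G.arrow x y) : G.Anterior x y := AnteriorStep.anterior (Or.inl h)

theorem Anterior.comp_le (h : G.Anterior i q) : G.comp i ≤ G.comp q := by
  replace h := anterior_iff.1 h
  induction h with
  | refl => exact le_rfl
  | tail _ hstep ih => exact ih.trans hstep.comp_le

theorem Anterior.comp_lt (h : G.Anterior i q) (hq : ¬ G.isContext q) (hne : i ≠ q) :
    G.comp i < G.comp q := by
  rcases (anterior_iff.1 h).cases_tail with rfl | ⟨p, hip, hstep | hstep⟩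
  · exact absurd rfl hne
  · exact (anterior_iff.2 hip).comp_le.trans_lt (G.arrow_resp _ _ hstep).2
  · exact absurd (G.full_ctx _ _ hstep).2.1 hq

def anteriorSet (G : RegressionGraph N) (c : Set N) : Set N := {q | ∃ i ∈ c, G.Anterior i q}

theorem union_antSet (c : Set N) : c ∪ G.antSet c = G.anteriorSet c := by
  ext q
  constructor
  · rintro (hq | ⟨_, i, hi, h⟩)
    · exact ⟨q, hq, anterior_refl q⟩
    · exact ⟨i, hi, h⟩
  · rintro ⟨i, hi, h⟩
    by_cases hq : q ∈ c
    · exact Or.inl hq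
    · exact Or.inr ⟨hq, i, hi, h⟩

theorem subset_anteriorSet : c ⊆ G.anteriorSet c :=
  fun q hq => ⟨q, hq, anterior_refl q⟩

theorem mem_anteriorSet_of_anterior (hp : p ∈ G.anteriorSet c) (h : G.Anterior p q) :
    q ∈ G.anteriorSet c :=
  let ⟨i, hi, hip⟩ := hp
  ⟨i, hi, hip.trans h⟩

theorem anteriorSet_mono {s t : Set N} (h : s ⊆ t) : G.anteriorSet s ⊆ G.anteriorSet t :=
  fun _ ⟨i, hi, hiq⟩ => ⟨i, h hi, hiq⟩

theorem anteriorSet_antSet_subset (s : Set N) : G.anteriorSet (G.antSet s) ⊆ G.anteriorSet s :=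
  fun _ ⟨_, ⟨_, hp⟩, hpq⟩ => mem_anteriorSet_of_anterior hp hpq

theorem exists_arrow_of_mem_anteriorSet (h : o ∈ G.anteriorSet c) (hoc : o ∉ c)
    (ho : ¬ G.isContext o) : ∃ d, G.arrow d o ∧ d ∈ G.anteriorSet c := by
  obtain ⟨i, hi, hio⟩ := h
  rcases (anterior_iff.1 hio).cases_tail with rfl | ⟨d, hid, hstep | hstep⟩
  · exact absurd hi hoc
  · exact ⟨d, hstep, i, hi, anterior_iff.2 hid⟩
  · exact absurd (G.full_ctx _ _ hstep).2.1 ho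

def IsCollision (G : RegressionGraph N) (x o y : N) : Prop :=
  G.ArrowheadAt x o ∧ G.ArrowheadAt y o

theorem IsCollision.symm (h : G.IsCollision x o y) : G.IsCollision y o x := ⟨h.2, h.1⟩

def IsActiveTriple (G : RegressionGraph N) (c : Set N) (x o y : N) : Prop :=
  (G.IsCollision x o y → o ∈ G.anteriorSet c) ∧ (¬ G.IsCollision x o y → o ∉ c)

theorem IsActiveTriple.symm (h : G.IsActiveTriple c x o y) : G.IsActiveTriple c y o x :=
  ⟨fun hc => h.1 hc.symm, fun hc => h.2 fun hc' => hc hc'.symm⟩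

theorem IsActiveTriple.isCollision (h : G.IsActiveTriple c x o y) (ho : o ∈ c) :
    G.IsCollision x o y :=
  by_contra fun hc => h.2 hc ho

theorem IsActiveTriple.of_arrowheadAt (h : G.IsActiveTriple c x o y)
    (hx : G.ArrowheadAt x o) (hx' : G.ArrowheadAt x' o) : G.IsActiveTriple c x' o y :=
  ⟨fun hc => h.1 ⟨hx, hc.2⟩, fun hc => h.2 fun hc' => hc ⟨hx', hc'.2⟩⟩

theorem IsActiveTriple.of_replace (h : G.IsActiveTriple c w x o)
    (hnew : G.ArrowheadAt w x → G.ArrowheadAt y x → ¬ G.ArrowheadAt o x →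
      x ∈ G.anteriorSet c)
    (hkeep : x ∈ c → G.ArrowheadAt o x → G.ArrowheadAt y x) :
    G.IsActiveTriple c w x y := by
  refine ⟨fun ⟨hw, hy⟩ => ?_, fun hc hx => hc ⟨(h.isCollision hx).1, ?_⟩⟩
  · by_cases ho : G.ArrowheadAt o x
    · exact h.1 ⟨hw, ho⟩
    · exact hnew hw hy ho
  · exact hkeep hx (h.isCollision hx).2

/-- `x` is anterior to `o` when the edge `x — o` has no arrowhead at `x`. -/
theorem IsActiveTriple.of_drop_collision (h : G.IsActiveTriple c w x o) (hxo : G.Adj x o)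
    (hxy : G.Adj x y) (hoc : o ∈ c) (hcoll : G.IsCollision x o y) :
    G.IsActiveTriple c w x y := by
  refine h.of_replace (fun hw _ ho => ?_) (fun _ ho => ?_)
  · have harr := arrow_of_not_arrowheadAt hxo.symm hw.not_isContext ho
    exact mem_anteriorSet_of_anterior (subset_anteriorSet hoc) (anterior_of_arrow harr)
  · exact (arrowheadAt_iff hxy.symm).2
      ⟨ho.not_isContext, ho.comp_le.trans hcoll.2.comp_le⟩


/-! ### Active walks and their surgery -/

structure IsActiveWalk (G : RegressionGraph N) (a b c : Set N) (f : ℕ → N) (m : ℕ) : Prop where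
  one_le : 1 ≤ m
  adj : ∀ t < m, G.Adj (f t) (f (t + 1))
  first_mem : f 0 ∈ a
  last_mem : f m ∈ b
  active : ∀ t, 0 < t → t < m → G.IsActiveTriple c (f (t - 1)) (f t) (f (t + 1))

theorem isActivePath_iff : G.IsActivePath a b c f m ↔
    (∀ s ≤ m, ∀ t ≤ m, f s = f t → s = t) ∧ G.IsActiveWalk a b c f m := by
  simp only [IsActivePath, IsCollisionAt, union_antSet]
  exact ⟨fun ⟨h1, h2, h3, h4, h5, h6⟩ => ⟨h2, h1, h3, h4, h5, h6⟩,
    fun ⟨h2, h1, h3, h4, h5, h6⟩ => ⟨h1, h2, h3, h4, h5, h6⟩⟩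

theorem IsActiveWalk.isCollision (hw : G.IsActiveWalk a b c f m) {t : ℕ} (ht : 0 < t)
    (htm : t < m) (hc : f t ∈ c) : G.IsCollision (f (t - 1)) (f t) (f (t + 1)) :=
  (hw.active t ht htm).isCollision hc

theorem IsActiveWalk.adj_pred (hw : G.IsActiveWalk a b c f m) {t : ℕ} (ht : 0 < t)
    (htm : t ≤ m) : G.Adj (f (t - 1)) (f t) := by
  have := hw.adj (t - 1) (by omega)
  rwa [Nat.sub_add_cancel ht] at this

theorem IsActiveWalk.reverse (hw : G.IsActiveWalk a b c f m) :
    G.IsActiveWalk b a c (fun u => f (m - u)) m where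
  one_le := hw.one_le
  adj t ht := by
    have := (hw.adj (m - (t + 1)) (by omega)).symm
    rwa [show m - (t + 1) + 1 = m - t by omega] at this
  first_mem := by simpa using hw.last_mem
  last_mem := by simpa using hw.first_mem
  active t ht htm := by
    have := (hw.active (m - t) (by omega) (by omega)).symm
    rwa [show m - t + 1 = m - (t - 1) by omega, show m - t - 1 = m - (t + 1) by omega] at this

def walkWeight (G : RegressionGraph N) (f : ℕ → N) (m : ℕ) : ℕ :=
  ∑ t ∈ Finset.range (m + 1), (G.comp (f t) + 1)

theorem walkWeight_reverse : G.walkWeight (fun u => f (m - u)) m = G.walkWeight f m := by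
  rw [walkWeight, ← Finset.sum_range_reflect]
  exact Finset.sum_congr rfl fun j hj => by
    rw [Finset.mem_range] at hj
    rw [show m - (m + 1 - 1 - j) = j by omega]

def HasLighterWalk (G : RegressionGraph N) (a b c : Set N) (f : ℕ → N) (m : ℕ) : Prop :=
  ∃ g m', G.IsActiveWalk a b c g m' ∧ G.walkWeight g m' < G.walkWeight f m

theorem HasLighterWalk.of_reverse (h : G.HasLighterWalk b a c (fun u => f (m - u)) m) :
    G.HasLighterWalk a b c f m := by
  obtain ⟨g, m', hg, hlt⟩ := h
  refine ⟨_, m', hg.reverse, ?_⟩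
  rwa [walkWeight_reverse, ← walkWeight_reverse (f := f)]

/-- `g` is `f` with the inner nodes `f (p + 1), …, f (q - 1)` replaced by
`g (p + 1), …, g (p + k - 1)`. -/
theorem IsActiveWalk.splice (hw : G.IsActiveWalk a b c f m) {g : ℕ → N} {p q k : ℕ}
    (hk : 0 < k) (hpq : p < q) (hqm : q ≤ m)
    (hpre : ∀ u ≤ p, g u = f u) (hsuf : ∀ u, g (p + k + u) = f (q + u))
    (hadj : ∀ u < k, G.Adj (g (p + u)) (g (p + u + 1)))
    (hact : ∀ u ≤ k, 0 < p + u → p + u < p + k + (m - q) →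
      G.IsActiveTriple c (g (p + u - 1)) (g (p + u)) (g (p + u + 1))) :
    G.IsActiveWalk a b c g (p + k + (m - q)) where
  one_le := by omega
  adj t ht := by
    rcases lt_or_ge t p with htp | htp
    · rw [hpre t htp.le, hpre (t + 1) htp]
      exact hw.adj t (by omega)
    rcases lt_or_ge t (p + k) with htk | htk
    · obtain ⟨u, rfl⟩ := Nat.exists_eq_add_of_le htp
      exact hadj u (by omega)
    · obtain ⟨u, rfl⟩ := Nat.exists_eq_add_of_le htk
      rw [hsuf, show p + k + u + 1 = p + k + (u + 1) by omega, hsuf]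
      exact hw.adj (q + u) (by omega)
  first_mem := by
    rw [hpre 0 (Nat.zero_le _)]
    exact hw.first_mem
  last_mem := by
    rw [hsuf, show q + (m - q) = m by omega]
    exact hw.last_mem
  active t ht htm := by
    rcases lt_or_ge t p with htp | htp
    · rw [hpre (t - 1) (by omega), hpre t htp.le, hpre (t + 1) htp]
      exact hw.active t ht (by omega)
    rcases le_or_gt t (p + k) with htk | htk
    · obtain ⟨u, rfl⟩ := Nat.exists_eq_add_of_le htp
      exact hact u (by omega) ht htm
    · obtain ⟨u, rfl⟩ : ∃ u, t = p + k + (u + 1) := ⟨t - (p + k) - 1, by omega⟩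
      have := hw.active (q + (u + 1)) (by omega) (by omega)
      rw [show q + (u + 1) - 1 = q + u by omega, show q + (u + 1) + 1 = q + (u + 2) by omega,
        ← hsuf, ← hsuf, ← hsuf] at this
      rwa [show p + k + (u + 1) - 1 = p + k + u by omega,
        show p + k + (u + 1) + 1 = p + k + (u + 2) by omega]

theorem walkWeight_splice {f g : ℕ → N} {p q k : ℕ} (hk : 0 < k) (hpq : p < q) (hqm : q ≤ m)
    (hpre : ∀ u ≤ p, g u = f u) (hsuf : ∀ u, g (p + k + u) = f (q + u)) :
    G.walkWeight g (p + k + (m - q)) + ∑ u ∈ Finset.Ico (p + 1) q, (G.comp (f u) + 1) =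
      G.walkWeight f m + ∑ u ∈ Finset.Ico (p + 1) (p + k), (G.comp (g u) + 1) := by
  have hg : G.walkWeight g (p + k + (m - q)) =
      ∑ u ∈ Finset.range (p + 1), (G.comp (g u) + 1) +
        (∑ u ∈ Finset.Ico (p + 1) (p + k), (G.comp (g u) + 1) +
          ∑ u ∈ Finset.Ico (p + k) (p + k + (m - q) + 1), (G.comp (g u) + 1)) := by
    rw [walkWeight, Finset.sum_Ico_consecutive _ (by omega) (by omega),
      Finset.sum_range_add_sum_Ico _ (by omega)]
  have hf : G.walkWeight f m =
      ∑ u ∈ Finset.range (p + 1), (G.comp (f u) + 1) +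
        (∑ u ∈ Finset.Ico (p + 1) q, (G.comp (f u) + 1) +
          ∑ u ∈ Finset.Ico q (m + 1), (G.comp (f u) + 1)) := by
    rw [walkWeight, Finset.sum_Ico_consecutive _ (by omega) (by omega),
      Finset.sum_range_add_sum_Ico _ (by omega)]
  have hpre' : ∑ u ∈ Finset.range (p + 1), (G.comp (g u) + 1) =
      ∑ u ∈ Finset.range (p + 1), (G.comp (f u) + 1) :=
    Finset.sum_congr rfl fun u hu => by rw [hpre u (by simpa [Nat.lt_succ_iff] using hu)]
  have hsuf' : ∑ u ∈ Finset.Ico (p + k) (p + k + (m - q) + 1), (G.comp (g u) + 1) =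
      ∑ u ∈ Finset.Ico q (m + 1), (G.comp (f u) + 1) := by
    rw [Finset.sum_Ico_eq_sum_range, Finset.sum_Ico_eq_sum_range,
      show p + k + (m - q) + 1 - (p + k) = m + 1 - q by omega]
    exact Finset.sum_congr rfl fun u _ => by rw [hsuf]
  omega

theorem IsActiveWalk.hasLighterWalk_of_splice (hw : G.IsActiveWalk a b c f m) {g : ℕ → N}
    {p q k : ℕ} (hk : 0 < k) (hpq : p < q) (hqm : q ≤ m)
    (hpre : ∀ u ≤ p, g u = f u) (hsuf : ∀ u, g (p + k + u) = f (q + u))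
    (hadj : ∀ u < k, G.Adj (g (p + u)) (g (p + u + 1)))
    (hact : ∀ u ≤ k, 0 < p + u → p + u < p + k + (m - q) →
      G.IsActiveTriple c (g (p + u - 1)) (g (p + u)) (g (p + u + 1)))
    (hlt : ∑ u ∈ Finset.Ico (p + 1) (p + k), (G.comp (g u) + 1) <
      ∑ u ∈ Finset.Ico (p + 1) q, (G.comp (f u) + 1)) :
    G.HasLighterWalk a b c f m :=
  ⟨g, _, hw.splice hk hpq hqm hpre hsuf hadj hact, by
    have := walkWeight_splice (G := G) hk hpq hqm hpre hsuf
    omega⟩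

theorem IsActiveWalk.hasLighterWalk_of_adj (hw : G.IsActiveWalk a b c f m) {p q : ℕ}
    (hpq : p + 1 < q) (hqm : q ≤ m) (hadj : G.Adj (f p) (f q))
    (hp : 0 < p → G.IsActiveTriple c (f (p - 1)) (f p) (f q))
    (hq : q < m → G.IsActiveTriple c (f p) (f q) (f (q + 1))) :
    G.HasLighterWalk a b c f m := by
  set g : ℕ → N := fun u => if u ≤ p then f u else f (q + (u - (p + 1))) with hg
  have hpre : ∀ u ≤ p, g u = f u := fun u hu => if_pos hu
  have hsuf : ∀ u, g (p + 1 + u) = f (q + u) := fun u => by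
    simp only [hg]
    rw [if_neg (by omega), Nat.add_sub_cancel_left]
  have hg1 : g (p + 1) = f q := by simpa using hsuf 0
  refine hw.hasLighterWalk_of_splice one_pos (by omega) hqm hpre hsuf ?_ ?_ ?_
  · intro u hu
    obtain rfl : u = 0 := by omega
    rw [add_zero, hpre p le_rfl, hg1]
    exact hadj
  · intro u hu hu0 huM
    interval_cases u
    · rw [add_zero] at hu0 ⊢
      rw [hpre _ (by omega), hpre p le_rfl, hg1]
      exact hp hu0
    · rw [Nat.add_sub_cancel, hpre p le_rfl, hg1, hsuf 1]
      exact hq (by omega)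
  · rw [Finset.Ico_self, Finset.sum_empty]
    exact Finset.sum_pos (fun _ _ => Nat.succ_pos _) (Finset.nonempty_Ico.2 hpq)

theorem IsActiveWalk.hasLighterWalk_of_bypass (hw : G.IsActiveWalk a b c f m) {p q : ℕ} {v : N}
    (hpq : p + 1 < q) (hqm : q ≤ m) (hpv : G.Adj (f p) v) (hvq : G.Adj v (f q))
    (hp : 0 < p → G.IsActiveTriple c (f (p - 1)) (f p) v)
    (hv : G.IsActiveTriple c (f p) v (f q))
    (hq : q < m → G.IsActiveTriple c v (f q) (f (q + 1)))
    (hlt : ∃ j, p < j ∧ j < q ∧ G.comp v < G.comp (f j)) :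
    G.HasLighterWalk a b c f m := by
  set g : ℕ → N := fun u => if u ≤ p then f u else if u = p + 1 then v else f (q + (u - (p + 2)))
    with hg
  have hpre : ∀ u ≤ p, g u = f u := fun u hu => if_pos hu
  have hsuf : ∀ u, g (p + 2 + u) = f (q + u) := fun u => by
    simp only [hg]
    rw [if_neg (by omega), if_neg (by omega), Nat.add_sub_cancel_left]
  have hg1 : g (p + 1) = v := by simp [hg]
  have hg2 : g (p + 1 + 1) = f q := by simpa using hsuf 0
  refine hw.hasLighterWalk_of_splice two_pos (by omega) hqm hpre hsuf ?_ ?_ ?_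
  · intro u hu
    interval_cases u
    · rw [add_zero, hpre p le_rfl, hg1]
      exact hpv
    · rw [hg1, hg2]
      exact hvq
  · intro u hu hu0 huM
    interval_cases u
    · rw [add_zero] at hu0 ⊢
      rw [hpre _ (by omega), hpre p le_rfl, hg1]
      exact hp hu0
    · rw [Nat.add_sub_cancel, hpre p le_rfl, hg1, hg2]
      exact hv
    · rw [show p + 2 - 1 = p + 1 by omega, hg1, show p + 2 = p + 1 + 1 by omega, hg2,
        show p + 1 + 1 + 1 = p + 2 + 1 by omega, hsuf 1]
      exact hq (by omega)
  · obtain ⟨j, hpj, hjq, hvj⟩ := hlt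
    rw [show p + 2 = p + 1 + 1 by omega, Nat.Ico_succ_singleton, Finset.sum_singleton, hg1]
    exact (Nat.add_lt_add_right hvj 1).trans_le (Finset.single_le_sum
      (f := fun u => G.comp (f u) + 1) (fun _ _ => Nat.zero_le _) (Finset.mem_Ico.2 ⟨hpj, hjq⟩))


/-- As long as the walk meets no collision node after `f j`, it follows arrows into ever
earlier components, so it cannot come back to `v = f t`: it meets a collision node, which lies
in `c ∪ ant c`. -/
theorem IsActiveWalk.mem_anteriorSet_of_descent (hw : G.IsActiveWalk a b c f m) {v : N}
    {t : ℕ} (htm : t ≤ m) (hft : f t = v) :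
    ∀ n j, j + n = t → 0 < j → G.ArrowheadAt (f (j - 1)) (f j) → G.Anterior (f j) v →
      G.comp (f j) < G.comp v → v ∈ G.anteriorSet c := by
  intro n
  induction n with
  | zero =>
    rintro j rfl - - - hlt
    exact absurd (hft ▸ hlt) (lt_irrefl _)
  | succ n ih =>
    intro j hj hj0 hhead hant hlt
    by_cases hcoll : G.IsCollision (f (j - 1)) (f j) (f (j + 1))
    · exact mem_anteriorSet_of_anterior ((hw.active j hj0 (by omega)).1 hcoll) hant
    have harr : G.arrow (f (j + 1)) (f j) := arrow_of_not_arrowheadAt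
      (hw.adj j (by omega)).symm hhead.not_isContext fun h => hcoll ⟨hhead, h⟩
    refine ih (j + 1) (by omega) (by omega) ?_ ((anterior_of_arrow harr).trans hant)
      ((G.arrow_resp _ _ harr).2.trans hlt)
    rw [Nat.add_sub_cancel]
    exact arrowheadAt_of_arrow harr

theorem IsActiveWalk.hasLighterWalk_of_eq (hw : G.IsActiveWalk a b c f m) {s t : ℕ}
    (hst : s < t) (htm : t < m) (heq : f s = f t) : G.HasLighterWalk a b c f m := by
  have hadj : G.Adj (f s) (f (t + 1)) := heq ▸ hw.adj t htm
  refine hw.hasLighterWalk_of_adj (by omega) (by omega) hadj (fun hs => ⟨fun hcoll => ?_,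
    fun hcoll hc => hcoll ⟨(hw.isCollision hs (by omega) hc).1, ?_⟩⟩) (fun ht => ?_)
  · by_cases hs' : G.IsCollision (f (s - 1)) (f s) (f (s + 1))
    · exact (hw.active s hs (by omega)).1 hs'
    have harr : G.arrow (f (s + 1)) (f s) := arrow_of_not_arrowheadAt
      (hw.adj s (by omega)).symm hcoll.1.not_isContext fun h => hs' ⟨hcoll.1, h⟩
    refine hw.mem_anteriorSet_of_descent htm.le heq.symm (t - (s + 1)) (s + 1) (by omega)
      (by omega) ?_ (anterior_of_arrow harr) (G.arrow_resp _ _ harr).2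
    rw [Nat.add_sub_cancel]
    exact arrowheadAt_of_arrow harr
  · rw [heq] at hc ⊢
    exact (hw.isCollision (by omega) htm hc).2
  · have := hw.active (t + 1) (by omega) ht
    rwa [Nat.add_sub_cancel, ← heq] at this

theorem IsActiveWalk.hasLighterWalk_of_mem_of_adj (hw : G.IsActiveWalk a b c f m) {t : ℕ}
    (ht : 0 < t) (htm : t < m) (hc : f t ∈ c) (hadj : G.Adj (f (t - 1)) (f (t + 1))) :
    G.HasLighterWalk a b c f m := by
  have hcoll := hw.isCollision ht htm hc
  have hl := hw.adj_pred ht htm.le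
  refine hw.hasLighterWalk_of_adj (by omega) htm hadj (fun ht1 => ?_) (fun ht1 => ?_)
  · have := hw.active (t - 1) ht1 (by omega)
    rw [Nat.sub_add_cancel ht] at this
    exact this.of_drop_collision hl hadj hc hcoll
  · have := (hw.active (t + 1) (by omega) ht1).symm
    rw [Nat.add_sub_cancel] at this
    exact (this.of_drop_collision (hw.adj t htm).symm hadj.symm hc hcoll.symm).symm

structure IsLightestWalk (G : RegressionGraph N) (a b c : Set N) (f : ℕ → N) (m : ℕ) : Prop
    extends G.IsActiveWalk a b c f m where
  not_hasLighterWalk : ¬ G.HasLighterWalk a b c f m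

theorem IsActiveWalk.exists_isLightestWalk (hw : G.IsActiveWalk a b c f m) :
    ∃ g m', G.IsLightestWalk a b c g m' := by
  obtain ⟨⟨g, m'⟩, hg, hmin⟩ := WellFounded.has_min
    (InvImage.wf (fun w : (ℕ → N) × ℕ => G.walkWeight w.1 w.2) wellFounded_lt)
    {w | G.IsActiveWalk a b c w.1 w.2} ⟨(f, m), hw⟩
  exact ⟨g, m', hg, fun ⟨g', m'', hg', hlt⟩ => hmin (g', m'') hg' hlt⟩

theorem IsLightestWalk.reverse (hf : G.IsLightestWalk a b c f m) :
    G.IsLightestWalk b a c (fun u => f (m - u)) m :=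
  ⟨hf.toIsActiveWalk.reverse, fun h => hf.not_hasLighterWalk h.of_reverse⟩

theorem IsLightestWalk.injective (hf : G.IsLightestWalk a b c f m) (hab : Disjoint a b) :
    ∀ s ≤ m, ∀ t ≤ m, f s = f t → s = t := by
  suffices h : ∀ s t, s < t → t ≤ m → f s ≠ f t by
    intro s hs t ht heq
    by_contra hne
    rcases Nat.lt_or_gt_of_ne hne with hst | hts
    · exact h s t hst ht heq
    · exact h t s hts hs heq.symm
  intro s t hst htm heq
  rcases htm.lt_or_eq with htm | rfl
  · exact hf.not_hasLighterWalk (hf.hasLighterWalk_of_eq hst htm heq)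
  · have hs : 0 < s := Nat.pos_of_ne_zero fun hs =>
      Set.disjoint_left.1 hab hf.first_mem (hs ▸ heq ▸ hf.last_mem)
    refine hf.reverse.not_hasLighterWalk
      (hf.reverse.hasLighterWalk_of_eq (s := 0) (t := t - s) (by omega) (by omega) ?_)
    simp only [Nat.sub_zero, Nat.sub_sub_self hst.le, heq]

theorem IsLightestWalk.apply_ne (hf : G.IsLightestWalk a b c f m) (hab : Disjoint a b)
    {s t : ℕ} (hs : s ≤ m) (ht : t ≤ m) (hst : s ≠ t) : f s ≠ f t :=
  fun h => hst (hf.injective hab s hs t ht h)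


/-! ### Separating non-adjacent nodes -/

/-- Walking backwards from a node entered without an arrowhead, the walk cannot turn at a
transmitting node (it would need both an arrowhead and a full line there), so it stays
anterior until it reaches the start or a collision node. -/
theorem IsActiveWalk.mem_anteriorSet_of_not_arrowheadAt (hw : G.IsActiveWalk a b c f m) :
    ∀ t, t + 1 ≤ m → ¬ G.ArrowheadAt (f t) (f (t + 1)) →
      f (t + 1) ∈ G.anteriorSet (insert (f 0) c) := by
  intro t
  induction t with
  | zero =>
    intro hm hnh
    exact ⟨f 0, Set.mem_insert _ _, (anteriorStep_of_not_arrowheadAt (hw.adj 0 hm) hnh).anterior⟩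
  | succ t ih =>
    intro htm hnh
    have hstep := anteriorStep_of_not_arrowheadAt (hw.adj (t + 1) htm) hnh
    refine mem_anteriorSet_of_anterior ?_ hstep.anterior
    have hact := hw.active (t + 1) (by omega) htm
    rw [Nat.add_sub_cancel] at hact
    by_cases hcoll : G.IsCollision (f t) (f (t + 1)) (f (t + 1 + 1))
    · exact anteriorSet_mono (Set.subset_insert _ _) (hact.1 hcoll)
    refine ih (by omega) fun hhead => hhead.not_isContext (hstep.isContext_of_symm ?_)
    exact anteriorStep_of_not_arrowheadAt (hw.adj (t + 1) htm).symm fun h => hcoll ⟨hhead, h⟩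

theorem anteriorSet_insert_antSet_subset {s : Set N} {x : N} (hx : x ∈ s) :
    G.anteriorSet (insert x (G.antSet s)) ⊆ G.anteriorSet s := by
  rintro q ⟨j, rfl | hj, hjq⟩
  · exact ⟨j, hx, hjq⟩
  · exact anteriorSet_antSet_subset s ⟨j, hj, hjq⟩

/-- The second node of an active walk from `i` to `k` given `ant {i, k}` is a collision node
anterior to `k`, hence lies in a strictly later component than `k`. -/
theorem IsActiveWalk.comp_lt_of_antSet (hw : G.IsActiveWalk {i} {k} (G.antSet {i, k}) f m)
    (hm : 1 < m) (hi : f 1 ≠ i) (hk : f 1 ≠ k) : G.comp k < G.comp i := by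
  have h0 : f 0 = i := hw.first_mem
  have hout : f 1 ∉ ({i, k} : Set N) := by rintro (h | h) <;> contradiction
  have hcoll : G.IsCollision (f 0) (f 1) (f 2) := by
    by_contra hcoll
    refine (hw.active 1 one_pos hm).2 hcoll ?_
    suffices f 1 ∈ G.anteriorSet {i, k} by
      rw [← union_antSet] at this
      exact this.resolve_left hout
    by_cases hhead : G.ArrowheadAt (f 0) (f 1)
    · have hrev := hw.reverse.mem_anteriorSet_of_not_arrowheadAt (m - 2) (by omega)
      simp only [show m - (m - 2 + 1) = 1 by omega, show m - (m - 2) = 2 by omega,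
        Nat.sub_zero] at hrev
      exact anteriorSet_insert_antSet_subset (s := {i, k}) (Or.inr hw.last_mem)
        (hrev fun h => hcoll ⟨hhead, h⟩)
    · exact anteriorSet_insert_antSet_subset (s := {i, k}) (Or.inl h0)
        (hw.mem_anteriorSet_of_not_arrowheadAt 0 (by omega) hhead)
  obtain ⟨e, he, hant⟩ := anteriorSet_antSet_subset _ ((hw.active 1 one_pos hm).1 hcoll)
  have hlt := hant.comp_lt hcoll.1.not_isContext fun h => hout (h ▸ he)
  have hle := hcoll.1.comp_le
  rw [h0] at hle
  rcases he with rfl | rfl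
  · omega
  · exact hlt.trans_le hle

theorem activePathFree_antSet (hn : ¬ G.Adj i k) :
    G.ActivePathFree {i} {k} (G.antSet {i, k}) := by
  rintro ⟨f, m, hp⟩
  obtain ⟨hinj, hw⟩ := isActivePath_iff.1 hp
  have h0 : f 0 = i := hw.first_mem
  have hm' : f m = k := hw.last_mem
  have hm : 1 < m := by
    by_contra hm
    have := hw.adj 0 (by have := hw.one_le; omega)
    rw [zero_add, show 1 = m by have := hw.one_le; omega, h0, hm'] at this
    exact hn this
  have hne : ∀ s ≤ m, s ≠ 0 → s ≠ m → f s ≠ i ∧ f s ≠ k := fun s hs h0' hm'' =>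
    ⟨fun h => h0' (hinj s hs 0 (Nat.zero_le _) (h.trans h0.symm)),
      fun h => hm'' (hinj s hs m le_rfl (h.trans hm'.symm))⟩
  obtain ⟨h1i, h1k⟩ := hne 1 hm.le one_ne_zero hm.ne
  obtain ⟨hpi, hpk⟩ := hne (m - 1) (by omega) (by omega) (by omega)
  have hrev := hw.reverse
  rw [Set.pair_comm] at hrev
  have := hw.comp_lt_of_antSet hm h1i h1k
  have := hrev.comp_lt_of_antSet hm hpk hpi
  omega

theorem not_mem_antSet_of_isCollision (h : G.IsCollision i o k) : o ∉ G.antSet {i, k} := by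
  rintro ⟨-, e, he, hant⟩
  rcases he with rfl | rfl
  · exact absurd h.1.comp_le (not_le.2 (hant.comp_lt h.1.not_isContext h.1.adj.ne))
  · exact absurd h.2.comp_le (not_le.2 (hant.comp_lt h.2.not_isContext h.2.adj.ne))

/-- A collision V of `G` that is a transmitting V of `G'` is an active path of `G'` given the
set `ant {i, k}` that separates its endpoints in `G`. -/
theorem isCollisionV_of_markov (hskel : ∀ i k, G.Adj i k ↔ G'.Adj i k)
    (hME : ∀ a b c : Set N, Disjoint a b → Disjoint a c → Disjoint b c →
      (G.ActivePathFree a b c ↔ G'.ActivePathFree a b c))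
    (hV : G.IsCollisionV i o k) : G'.IsCollisionV i o k := by
  obtain ⟨hio, hok, hik, hn, h1, h2⟩ := hV
  have hio' := (hskel _ _).1 hio
  have hok' := (hskel _ _).1 hok
  suffices h : G'.IsCollision i o k from
    ⟨hio', hok', hik, fun h => hn ((hskel _ _).2 h), h.1, h.2⟩
  by_contra hnot
  have hdisj : ∀ x ∈ ({i, k} : Set N), Disjoint {x} (G.antSet {i, k}) :=
    fun x hx => Set.disjoint_singleton_left.2 fun h => h.1 hx
  refine (hME {i} {k} _ (Set.disjoint_singleton.2 hik) (hdisj i (Or.inl rfl))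
    (hdisj k (Or.inr rfl))).1 (activePathFree_antSet hn)
    ⟨fun t => if t = 0 then i else if t = 1 then o else k, 2, ?_⟩
  refine isActivePath_iff.2 ⟨?_, by omega, ?_, rfl, ?_, ?_⟩
  · have := hio.ne
    have := hio.ne.symm
    have := hok.ne
    have := hok.ne.symm
    have := Ne.symm hik
    intro s hs t ht
    interval_cases s <;> interval_cases t <;> simp_all
  · intro t ht
    interval_cases t
    · simpa using hio'
    · simpa using hok'
  · simp
  · intro t ht0 ht2
    obtain rfl : t = 1 := by omega
    exact ⟨fun hc => absurd hc hnot, fun _ => not_mem_antSet_of_isCollision ⟨h1, h2⟩⟩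


/-! ### Lightest walks under the same skeleton and collision Vs -/

structure SameSkeletonAndVs (G G' : RegressionGraph N) : Prop where
  adj_iff : ∀ i k, G.Adj i k ↔ G'.Adj i k
  isCollisionV_iff : ∀ i o k, G.IsCollisionV i o k ↔ G'.IsCollisionV i o k

theorem SameSkeletonAndVs.symm (h : SameSkeletonAndVs G G') : SameSkeletonAndVs G' G :=
  ⟨fun i k => (h.adj_iff i k).symm, fun i o k => (h.isCollisionV_iff i o k).symm⟩

theorem SameSkeletonAndVs.isCollision_iff (h : SameSkeletonAndVs G G') (hxo : G.Adj x o)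
    (hoy : G.Adj o y) (hxy : x ≠ y) (hn : ¬ G.Adj x y) :
    G.IsCollision x o y ↔ G'.IsCollision x o y := by
  constructor
  · intro hc
    obtain ⟨-, -, -, -, h1, h2⟩ := (h.isCollisionV_iff x o y).1 ⟨hxo, hoy, hxy, hn, hc.1, hc.2⟩
    exact ⟨h1, h2⟩
  · intro hc
    obtain ⟨-, -, -, -, h1, h2⟩ := (h.isCollisionV_iff x o y).2 ⟨(h.adj_iff _ _).1 hxo,
      (h.adj_iff _ _).1 hoy, hxy, fun h' => hn ((h.adj_iff _ _).2 h'), hc.1, hc.2⟩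
    exact ⟨h1, h2⟩

/-- Following arrows from `o` towards `c` through children in the earliest possible components,
consecutive triples are unshielded transmitting Vs, which `G'` shares; so if `G'` keeps the
first arrow, it keeps the whole chain. -/
theorem SameSkeletonAndVs.exists_arrow (h : SameSkeletonAndVs G G') :
    ∀ o, (∃ d, G.arrow d o ∧ d ∈ G.anteriorSet c) →
      ∃ d, G.arrow d o ∧ d ∈ G.anteriorSet c ∧ (G'.arrow d o → o ∈ G'.anteriorSet c) := by
  intro o
  induction o using (InvImage.wf G.comp wellFounded_lt).induction with
  | _ o ih =>
  intro hS
  obtain ⟨d, ⟨hdo, hdc⟩, hmin⟩ := (InvImage.wf G.comp wellFounded_lt).has_min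
    {d | G.arrow d o ∧ d ∈ G.anteriorSet c} hS
  refine ⟨d, hdo, hdc, fun hdo' => mem_anteriorSet_of_anterior ?_ (anterior_of_arrow hdo')⟩
  by_cases hd : d ∈ c
  · exact subset_anteriorSet hd
  have hdo_lt := (G.arrow_resp _ _ hdo).2
  obtain ⟨e, hed, hec, hed'⟩ := ih d hdo_lt
    (exists_arrow_of_mem_anteriorSet hdc hd (G.arrow_resp _ _ hdo).1)
  have hed_lt := (G.arrow_resp _ _ hed).2
  refine hed' (arrow_of_not_arrowheadAt ((h.adj_iff _ _).1 (adj_of_arrow hed))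
    (G'.arrow_resp _ _ hdo').1 fun hhead => ?_)
  have hoe : ¬ G.Adj o e := fun hoe => hmin e
    ⟨arrow_of_comp_lt hoe.symm (G.arrow_resp _ _ hed).1 (hed_lt.trans hdo_lt), hec⟩ hed_lt
  have hcoll := (h.isCollision_iff (adj_of_arrow hdo).symm (adj_of_arrow hed).symm
    (fun he => by rw [he] at hdo_lt; omega) hoe).2 ⟨arrowheadAt_of_arrow hdo', hhead⟩
  exact absurd hcoll.2.comp_le (by omega)


/-- Searching backwards from `f p`, which is adjacent to the pivot `z`, across collision nodes
in `c`: the walk could skip such a node if its neighbours were adjacent; otherwise its V is a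
collision V of `G'` as well, and this forces the preceding node to be adjacent to `z` too. -/
theorem IsLightestWalk.exists_exit (hf : G.IsLightestWalk a b c f m)
    (h : SameSkeletonAndVs G G') (hab : Disjoint a b) (hz : ¬ G.isContext z) :
    ∀ p < m, G.Adj (f p) z → G.comp z < G.comp (f p) → G'.comp (f (p + 1)) ≤ G'.comp z →
      ∃ e ≤ p, G.Adj (f e) z ∧ G.ArrowheadAt (f e) z ∧
        (0 < e → G.IsActiveTriple c (f (e - 1)) (f e) z) := by
  intro p
  induction p with
  | zero =>
    exact fun _ hadj hlt _ => ⟨0, le_rfl, hadj, (arrowheadAt_iff hadj).2 ⟨hz, hlt.le⟩,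
      fun h0 => absurd h0 (lt_irrefl 0)⟩
  | succ p ih =>
    intro hpm hadj hlt hle
    have hnh : ¬ G.ArrowheadAt z (f (p + 1)) := fun hh => absurd hh.comp_le (not_le.2 hlt)
    by_cases hc : f (p + 1) ∈ c
    swap
    · exact ⟨p + 1, le_rfl, hadj, (arrowheadAt_iff hadj).2 ⟨hz, hlt.le⟩,
        fun _ => ⟨fun hcoll => absurd hcoll.2 hnh, fun _ => hc⟩⟩
    have hcoll := hf.isCollision (by omega : 0 < p + 1) hpm hc
    rw [Nat.add_sub_cancel] at hcoll
    by_cases hpq : G.Adj (f p) (f (p + 1 + 1))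
    · refine absurd (hf.hasLighterWalk_of_mem_of_adj (by omega : 0 < p + 1) hpm hc ?_)
        hf.not_hasLighterWalk
      rwa [Nat.add_sub_cancel]
    have hcoll' := (h.isCollision_iff (hf.adj p (by omega)) (hf.adj (p + 1) hpm)
      (hf.apply_ne hab (by omega) (by omega) (by omega)) hpq).1 hcoll
    have hle' : G'.comp (f (p + 1)) ≤ G'.comp z := hcoll'.2.comp_le.trans hle
    by_cases hpz : G.Adj (f p) z
    · obtain ⟨e, he, hexit⟩ := ih (by omega) hpz (hlt.trans_le hcoll.1.comp_le) hle'
      exact ⟨e, by omega, hexit⟩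
    have hnz := (h.isCollision_iff (hf.adj p (by omega)) hadj
      (fun he => by have := hcoll.1.comp_le; rw [he] at this; omega) hpz).not.1
      fun hh => hnh hh.2
    exact (hnz ⟨hcoll'.1, (arrowheadAt_iff ((h.adj_iff _ _).1 hadj.symm)).2
      ⟨hcoll'.1.not_isContext, hle'⟩⟩).elim

theorem IsLightestWalk.exists_exit_right (hf : G.IsLightestWalk a b c f m)
    (h : SameSkeletonAndVs G G') (hab : Disjoint a b) (hz : ¬ G.isContext z) {p : ℕ}
    (hp : 0 < p) (hpm : p ≤ m) (hadj : G.Adj (f p) z) (hlt : G.comp z < G.comp (f p))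
    (hle : G'.comp (f (p - 1)) ≤ G'.comp z) :
    ∃ q, p ≤ q ∧ q ≤ m ∧ G.Adj (f q) z ∧ G.ArrowheadAt (f q) z ∧
      (q < m → G.IsActiveTriple c z (f q) (f (q + 1))) := by
  obtain ⟨e, hep, hadj', hhead, hact⟩ := hf.reverse.exists_exit h hab.symm hz (m - p)
    (by omega) (by simpa only [Nat.sub_sub_self hpm] using hadj)
    (by simpa only [Nat.sub_sub_self hpm] using hlt)
    (by simpa only [show m - (m - p + 1) = p - 1 by omega] using hle)
  refine ⟨m - e, by omega, by omega, hadj', hhead, fun hq => ?_⟩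
  have := (hact (by omega)).symm
  rwa [show m - (e - 1) = m - e + 1 by omega] at this

theorem IsLightestWalk.isCollision_of_mem (hf : G.IsLightestWalk a b c f m)
    (h : SameSkeletonAndVs G G') (hab : Disjoint a b) {t : ℕ} (ht : 0 < t) (htm : t < m)
    (hc : f t ∈ c) : G'.IsCollision (f (t - 1)) (f t) (f (t + 1)) := by
  by_cases hxy : G.Adj (f (t - 1)) (f (t + 1))
  · exact absurd (hf.hasLighterWalk_of_mem_of_adj ht htm hc hxy) hf.not_hasLighterWalk
  exact (h.isCollision_iff (hf.adj_pred ht htm.le) (hf.adj t htm)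
    (hf.apply_ne hab (by omega) (by omega) (by omega)) hxy).1 (hf.isCollision ht htm hc)

/-- The triple could only break with `f (t - 1) ∈ c` in a later component than `f (t + 1)`; then
`f (t + 1)` serves as the pivot of `exists_exit`, and the walk gets lighter. -/
theorem IsLightestWalk.isActiveTriple_skip (hf : G.IsLightestWalk a b c f m)
    (h : SameSkeletonAndVs G G') (hab : Disjoint a b) {t : ℕ} (ht : 1 < t) (htm : t < m)
    (hG : ¬ G.IsCollision (f (t - 1)) (f t) (f (t + 1)))
    (hG' : G'.IsCollision (f (t - 1)) (f t) (f (t + 1)))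
    (hxy : G.Adj (f (t - 1)) (f (t + 1))) :
    G.IsActiveTriple c (f (t - 2)) (f (t - 1)) (f (t + 1)) := by
  have hact := hf.active (t - 1) (by omega) (by omega)
  rw [show t - 1 - 1 = t - 2 by omega, Nat.sub_add_cancel (by omega : 1 ≤ t)] at hact
  have hxo := hf.adj_pred (by omega : 0 < t) htm.le
  refine hact.of_replace (fun _ hyx hox => ?_) (fun _ hox => ?_)
  · -- `f (t - 1) → f t → f (t + 1)`, yet the edge `f (t + 1) — f (t - 1)` points to `f (t - 1)`
    have harr := arrow_of_not_arrowheadAt hxo.symm hyx.not_isContext hox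
    have harr' := arrow_of_not_arrowheadAt (hf.adj t htm).symm (G.arrow_resp _ _ harr).1
      fun hyo => hG ⟨arrowheadAt_of_arrow harr, hyo⟩
    have := hyx.comp_le
    have := (G.arrow_resp _ _ harr).2
    have := (G.arrow_resp _ _ harr').2
    omega
  · by_contra hyx
    have hlt : G.comp (f (t + 1)) < G.comp (f (t - 1)) := by
      by_contra hle
      exact hyx ((arrowheadAt_iff hxy.symm).2 ⟨hox.not_isContext, by omega⟩)
    have hy := not_isContext_of_comp_lt hox.not_isContext hlt
    obtain ⟨e, he, hey, hhead, hacte⟩ := hf.exists_exit h hab hy (t - 1) (by omega) hxy hlt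
      (by rw [Nat.sub_add_cancel (by omega : 1 ≤ t)]; exact hG'.2.comp_le)
    refine hf.not_hasLighterWalk
      (hf.hasLighterWalk_of_adj (by omega) (by omega) hey hacte fun ht' => ?_)
    have := hf.active (t + 1) (by omega) ht'
    rw [Nat.add_sub_cancel] at this
    exact this.of_arrowheadAt ((arrowheadAt_iff (hf.adj t htm)).2
      ⟨hy, by have := hox.comp_le; omega⟩) hhead

theorem IsLightestWalk.not_isCollision (hf : G.IsLightestWalk a b c f m)
    (h : SameSkeletonAndVs G G') (hab : Disjoint a b) {t : ℕ} (ht : 0 < t) (htm : t < m)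
    (hG : ¬ G.IsCollision (f (t - 1)) (f t) (f (t + 1))) :
    ¬ G'.IsCollision (f (t - 1)) (f t) (f (t + 1)) := by
  intro hG'
  have hxy : G.Adj (f (t - 1)) (f (t + 1)) := by
    by_contra hxy
    exact hG ((h.isCollision_iff (hf.adj_pred ht htm.le) (hf.adj t htm)
      (hf.apply_ne hab (by omega) (by omega) (by omega)) hxy).2 hG')
  refine hf.not_hasLighterWalk (hf.hasLighterWalk_of_adj (by omega) (by omega) hxy
    (fun ht1 => ?_) (fun ht1 => ?_))
  · have := hf.isActiveTriple_skip h hab (by omega) htm hG hG' hxy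
    rwa [show t - 2 = t - 1 - 1 by omega] at this
  · have e1 : m - (m - t - 1) = t + 1 := by omega
    have e2 : m - (m - t) = t := by omega
    have e3 : m - (m - t + 1) = t - 1 := by omega
    have e4 : m - (m - t - 2) = t + 1 + 1 := by omega
    have := hf.reverse.isActiveTriple_skip h hab.symm (t := m - t) (by omega) (by omega)
      (by simpa only [e1, e2, e3] using fun hc => hG hc.symm)
      (by simpa only [e1, e2, e3] using hG'.symm)
      (by simpa only [e1, e3] using hxy.symm)
    simp only [e1, e3, e4] at this
    exact this.symm

/-- A collision node `f t ∈ ant c` of `G` that `G'` does not place in `c ∪ ant c` could be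
bypassed through its child `d` towards `c`, which is adjacent to both neighbours of `f t`. -/
theorem IsLightestWalk.mem_anteriorSet (hf : G.IsLightestWalk a b c f m)
    (h : SameSkeletonAndVs G G') (hab : Disjoint a b) {t : ℕ} (ht : 0 < t) (htm : t < m)
    (hG : G.IsCollision (f (t - 1)) (f t) (f (t + 1)))
    (hG' : G'.IsCollision (f (t - 1)) (f t) (f (t + 1))) : f t ∈ G'.anteriorSet c := by
  by_cases hc : f t ∈ c
  · exact subset_anteriorSet hc
  by_contra hnot
  obtain ⟨d, hdo, hdc, hd'⟩ := h.exists_arrow (f t)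
    (exists_arrow_of_mem_anteriorSet ((hf.active t ht htm).1 hG) hc hG.1.not_isContext)
  have hlt : G.comp d < G.comp (f t) := (G.arrow_resp _ _ hdo).2
  have hod : G.Adj (f t) d := (adj_of_arrow hdo).symm
  have hhead' : G'.ArrowheadAt d (f t) := by_contra fun hn => hnot
    (hd' (arrow_of_not_arrowheadAt ((h.adj_iff _ _).1 hod.symm) hG'.1.not_isContext hn))
  have hchord : ∀ s, G.Adj (f s) (f t) → G.ArrowheadAt (f s) (f t) →
      G'.ArrowheadAt (f s) (f t) → G.Adj (f s) d := fun s hs hh hh' => by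
    by_contra hn
    have hne : f s ≠ d := fun he => by have := hh.comp_le; rw [he] at this; omega
    exact absurd ((h.isCollision_iff hs hod hne hn).2 ⟨hh', hhead'⟩).2.comp_le (by omega)
  have hd : ¬ G.isContext d := (G.arrow_resp _ _ hdo).1
  obtain ⟨e, he, hed, hhe, hacte⟩ := hf.exists_exit h hab hd (t - 1) (by omega)
    (hchord _ (hf.adj_pred ht htm.le) hG.1 hG'.1) (hlt.trans_le hG.1.comp_le)
    (by rw [Nat.sub_add_cancel ht]; exact hhead'.comp_le)
  obtain ⟨q, hq, hqm, hqd, hhq, hactq⟩ := hf.exists_exit_right h hab hd (p := t + 1)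
    (by omega) htm (hchord _ (hf.adj t htm).symm hG.2 hG'.2) (hlt.trans_le hG.2.comp_le)
    (by rw [Nat.add_sub_cancel]; exact hhead'.comp_le)
  exact hf.not_hasLighterWalk (hf.hasLighterWalk_of_bypass (by omega) hqm hed hqd.symm hacte
    ⟨fun _ => hdc, fun hn => absurd ⟨hhe, hhq⟩ hn⟩ hactq ⟨t, by omega, by omega, hlt⟩)

theorem IsLightestWalk.isActivePath (hf : G.IsLightestWalk a b c f m)
    (h : SameSkeletonAndVs G G') (hab : Disjoint a b) : G'.IsActivePath a b c f m := by
  refine isActivePath_iff.2 ⟨hf.injective hab, hf.one_le,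
    fun t ht => (h.adj_iff _ _).1 (hf.adj t ht), hf.first_mem, hf.last_mem,
    fun t ht htm => ⟨fun hG' => ?_, fun hG' hc => hG' (hf.isCollision_of_mem h hab ht htm hc)⟩⟩
  by_cases hG : G.IsCollision (f (t - 1)) (f t) (f (t + 1))
  · exact hf.mem_anteriorSet h hab ht htm hG hG'
  · exact absurd hG' (hf.not_isCollision h hab ht htm hG)

theorem SameSkeletonAndVs.activePathFree_iff (h : SameSkeletonAndVs G G')
    (hab : Disjoint a b) : G.ActivePathFree a b c ↔ G'.ActivePathFree a b c := by
  suffices H : ∀ {G G' : RegressionGraph N}, SameSkeletonAndVs G G' →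
      (∃ f m, G.IsActivePath a b c f m) → ∃ f m, G'.IsActivePath a b c f m from
    not_congr ⟨H h, H h.symm⟩
  rintro G G' h ⟨f, m, hp⟩
  obtain ⟨g, m', hg⟩ := (isActivePath_iff.1 hp).2.exists_isLightestWalk
  exact ⟨g, m', hg.isActivePath h hab⟩

end RegressionGraph

theorem markov_equivalent_iff_same_collision_Vs_general
    {N : Type} (G G' : RegressionGraph N)
    (hskel : ∀ i k, G.Adj i k ↔ G'.Adj i k) :
    ((∀ a b c : Set N, Disjoint a b → Disjoint a c → Disjoint b c →
        (G.ActivePathFree a b c ↔ G'.ActivePathFree a b c)) ↔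
      (∀ i o k, G.IsCollisionV i o k ↔ G'.IsCollisionV i o k)) := by
  constructor
  · intro hME i o k
    exact ⟨RegressionGraph.isCollisionV_of_markov hskel hME,
      RegressionGraph.isCollisionV_of_markov (fun i k => (hskel i k).symm)
        fun a b c hab hac hbc => (hME a b c hab hac hbc).symm⟩
  · intro hV a b c hab _ _
    exact RegressionGraph.SameSkeletonAndVs.activePathFree_iff ⟨hskel, hV⟩ hab

/-- **Markov equivalence of regression graphs** (Wermuth and Sadeghi, 2012).
Two regression graphs on the same finite node set having the same skeleton are
Markov equivalent — for all disjoint subsets `a`, `b`, `c` of the node set, one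
graph has no active path between `a` and `b` given `c` exactly when the other
has none — if and only if they have identical sets of collision V-configurations. -/
theorem markov_equivalent_iff_same_collision_Vs
    {N : Type} [Fintype N] (G G' : RegressionGraph N)
    (hskel : ∀ i k, G.Adj i k ↔ G'.Adj i k) :
    ((∀ a b c : Set N, Disjoint a b → Disjoint a c → Disjoint b c →
        (G.ActivePathFree a b c ↔ G'.ActivePathFree a b c)) ↔
      (∀ i o k, G.IsCollisionV i o k ↔ G'.IsCollisionV i o k)) :=
  markov_equivalent_iff_same_collision_Vs_general G G' hskel
end

section
/- Let P be a strictly positive probability distribution on {0,1} × {0,1} × {0,1} with coordinate variables A, B, C. If A ⫫ B (marginal independence) and A ⫫ B | C (conditional independence given C), then A ⫫ C or B ⫫ C. In other words, every positive distribution of three binary variables satisfies singleton transitivity. -/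
/-!
Write `x_c = P(A=0, C=c)`, `y_c = P(B=0, C=c)` and `γ_c = P(C=c)`. Conditional independence
gives `P(A=0, B=0, C=c) γ_c = x_c y_c`, and marginal independence says that these two masses
add up to `(x_0 + x_1)(y_0 + y_1)`. Eliminating them leaves the identity
`(x_0 - (x_0 + x_1) γ_0) (y_0 - (y_0 + y_1) γ_0) = 0`, i.e. the covariance of `1{A=0}` with
`1{C=0}` or that of `1{B=0}` with `1{C=0}` vanishes. For binary variables one vanishing
covariance already means independence.
-/

/-- Marginal probability of `A = a`. -/
noncomputable def pA (P : Fin 2 × Fin 2 × Fin 2 → ℝ) (a : Fin 2) : ℝ :=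
  ∑ b, ∑ c, P (a, b, c)

/-- Marginal probability of `B = b`. -/
noncomputable def pB (P : Fin 2 × Fin 2 × Fin 2 → ℝ) (b : Fin 2) : ℝ :=
  ∑ a, ∑ c, P (a, b, c)

/-- Marginal probability of `C = c`. -/
noncomputable def pC (P : Fin 2 × Fin 2 × Fin 2 → ℝ) (c : Fin 2) : ℝ :=
  ∑ a, ∑ b, P (a, b, c)

/-- Marginal probability of `A = a, B = b`. -/
noncomputable def pAB (P : Fin 2 × Fin 2 × Fin 2 → ℝ) (a b : Fin 2) : ℝ :=
  ∑ c, P (a, b, c)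

/-- Marginal probability of `A = a, C = c`. -/
noncomputable def pAC (P : Fin 2 × Fin 2 × Fin 2 → ℝ) (a c : Fin 2) : ℝ :=
  ∑ b, P (a, b, c)

/-- Marginal probability of `B = b, C = c`. -/
noncomputable def pBC (P : Fin 2 × Fin 2 × Fin 2 → ℝ) (b c : Fin 2) : ℝ :=
  ∑ a, P (a, b, c)

lemma covariance_mul_eq_zero_of_condIndep {R : Type*} [CommRing R] {x₀ x₁ y₀ y₁ γ₀ γ₁ q₀ q₁ : R}
    (hq₀ : q₀ * γ₀ = x₀ * y₀) (hq₁ : q₁ * γ₁ = x₁ * y₁)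
    (hxy : (x₀ + x₁) * (y₀ + y₁) = q₀ + q₁) (hγ : γ₀ + γ₁ = 1) :
    (x₀ - (x₀ + x₁) * γ₀) * (y₀ - (y₀ + y₁) * γ₀) = 0 := by
  linear_combination (γ₀ - 1) * hq₀ - γ₀ * hq₁ + (γ₀ ^ 2 - γ₀) * hxy + q₁ * γ₀ * hγ

lemma Fin.two_table_eq_mul_margins_of_zero_zero {R : Type*} [CommRing R]
    {f : Fin 2 → Fin 2 → R} {r s : Fin 2 → R}
    (hr : ∀ a, r a = ∑ c, f a c) (hs : ∀ c, s c = ∑ a, f a c)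
    (htot : ∑ a, ∑ c, f a c = 1) (h₀₀ : f 0 0 = r 0 * s 0) :
    ∀ a c, f a c = r a * s c := by
  simp only [Fin.sum_univ_two] at hr hs htot
  have hr₀ := hr 0; have hr₁ := hr 1; have hs₀ := hs 0; have hs₁ := hs 1
  have h₀₁ : f 0 1 = r 0 * s 1 := by
    linear_combination -hr₀ - h₀₀ - r 0 * (hs₀ + hs₁ + htot)
  have h₁₀ : f 1 0 = r 1 * s 0 := by
    linear_combination -hs₀ - h₀₀ - s 0 * (hr₀ + hr₁ + htot)
  have h₁₁ : f 1 1 = r 1 * s 1 := by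
    linear_combination -hs₁ - h₀₁ - s 1 * (hr₀ + hr₁ + htot)
  intro a c
  fin_cases a <;> fin_cases c <;> assumption

section Marginals

variable (P : Fin 2 × Fin 2 × Fin 2 → ℝ)

lemma pA_eq_sum_pAC (a : Fin 2) : pA P a = ∑ c, pAC P a c :=
  Finset.sum_comm

lemma pC_eq_sum_pAC (c : Fin 2) : pC P c = ∑ a, pAC P a c :=
  rfl

lemma pB_eq_sum_pBC (b : Fin 2) : pB P b = ∑ c, pBC P b c := by
  simp only [pB, pBC]
  exact Finset.sum_comm

lemma pC_eq_sum_pBC (c : Fin 2) : pC P c = ∑ b, pBC P b c :=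
  Finset.sum_comm

lemma sum_pC : ∑ c, pC P c = ∑ x, P x := by
  simp only [pC, Fintype.sum_prod_type]
  rw [Finset.sum_comm]
  exact Finset.sum_congr rfl fun _ _ => Finset.sum_comm

lemma sum_sum_pAC : ∑ a, ∑ c, pAC P a c = ∑ x, P x := by
  simp only [Finset.sum_comm (γ := Fin 2) (f := pAC P), ← pC_eq_sum_pAC, sum_pC]

lemma sum_sum_pBC : ∑ b, ∑ c, pBC P b c = ∑ x, P x := by
  simp only [Finset.sum_comm (γ := Fin 2) (f := pBC P), ← pC_eq_sum_pBC, sum_pC]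

end Marginals

theorem positive_binary_singleton_transitivity_general
    (P : Fin 2 × Fin 2 × Fin 2 → ℝ)
    (hsum : (∑ x, P x) = 1)
    (hAB : ∀ a b, pAB P a b = pA P a * pB P b)
    (hABgC : ∀ a b c, P (a, b, c) * pC P c = pAC P a c * pBC P b c) :
    (∀ a c, pAC P a c = pA P a * pC P c) ∨
    (∀ b c, pBC P b c = pB P b * pC P c) := by
  have hγ : pC P 0 + pC P 1 = 1 := by
    rw [← hsum, ← sum_pC, Fin.sum_univ_two]
  have hxy : (pAC P 0 0 + pAC P 0 1) * (pBC P 0 0 + pBC P 0 1) = P (0, 0, 0) + P (0, 0, 1) := by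
    rw [← Fin.sum_univ_two, ← Fin.sum_univ_two (pBC P 0), ← pA_eq_sum_pAC, ← pB_eq_sum_pBC,
      ← hAB, pAB, Fin.sum_univ_two]
  have hcov := covariance_mul_eq_zero_of_condIndep (hABgC 0 0 0) (hABgC 0 0 1) hxy hγ
  rw [← Fin.sum_univ_two, ← Fin.sum_univ_two (pBC P 0), ← pA_eq_sum_pAC,
    ← pB_eq_sum_pBC] at hcov
  rcases mul_eq_zero.1 hcov with hA | hB
  · exact .inl <| Fin.two_table_eq_mul_margins_of_zero_zero (pA_eq_sum_pAC P) (pC_eq_sum_pAC P)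
      ((sum_sum_pAC P).trans hsum) (sub_eq_zero.1 hA)
  · exact .inr <| Fin.two_table_eq_mul_margins_of_zero_zero (pB_eq_sum_pBC P) (pC_eq_sum_pBC P)
      ((sum_sum_pBC P).trans hsum) (sub_eq_zero.1 hB)

/-- **Singleton transitivity of positive binary distributions** (Simpson, 1951).
Let `P` be a strictly positive probability distribution of three binary variables
`A`, `B`, `C`. If `A ⫫ B` (marginally) and `A ⫫ B | C`, then `A ⫫ C` or `B ⫫ C`.
(Conditional independence given `C` is stated in the equivalent product form
`P(A=a,B=b,C=c)·P(C=c) = P(A=a,C=c)·P(B=b,C=c)`, valid since `P(C=c) > 0`.) -/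
theorem positive_binary_singleton_transitivity
    (P : Fin 2 × Fin 2 × Fin 2 → ℝ)
    (hpos : ∀ x, 0 < P x) (hsum : (∑ x, P x) = 1)
    (hAB : ∀ a b, pAB P a b = pA P a * pB P b)
    (hABgC : ∀ a b c, P (a, b, c) * pC P c = pAC P a c * pBC P b c) :
    (∀ a c, pAC P a c = pA P a * pC P c) ∨
    (∀ b c, pBC P b c = pB P b * pC P c) :=
  positive_binary_singleton_transitivity_general P hsum hAB hABgC
end

section
/- Let Σ be a real symmetric positive definite matrix indexed by a finite set N. For every d ⊆ N and distinct i, k, h in N \ d, one has σ_{hh|d} > 0 and the recursion relation σ_{ik|{h}∪d} = σ_{ik|d} − σ_{ih|d} · σ_{hk|d} / σ_{hh|d} holds. -/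
/-- The partial covariance `σ_{ik|d} = Σ_{ik} − Σ_{id} (Σ_{dd})⁻¹ Σ_{dk}`,
an entry of the Schur complement of the block `Σ_{dd}` (with `σ_{ik|∅} = Σ_{ik}`). -/
noncomputable def partialCov {N : Type} [Fintype N] [DecidableEq N]
    (S : Matrix N N ℝ) (d : Finset N) (i k : N) : ℝ :=
  S i k - ∑ p : {x // x ∈ d}, ∑ q : {x // x ∈ d},
    S i p.1 * (Matrix.of fun p' q' : {x // x ∈ d} => S p'.1 q'.1)⁻¹ p q * S q.1 k

/-!
The column `σ_{·k|d}` is `S r_k` for the residual vector `r_k = e_k − Σ_{dd}⁻¹ Σ_{dk}` (the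
second term extended by zero off `d`). This vector agrees with `e_k` off `d` and `S r_k`
vanishes on `d`; positive definiteness makes these two properties characterise `r_k`, since
the difference `v` of two such vectors has `vᵀ S v = 0`. Hence `σ_{hh|d} = r_hᵀ S r_h > 0`,
and `r_k − (σ_{hk|d} / σ_{hh|d}) r_h` has the characterising properties for `{h} ∪ d`, which
yields the recursion.
-/

open Matrix

section ExtendByZero

variable {ι R : Type*} [NonUnitalNonAssocSemiring R] [DecidableEq ι]

def extendByZero (d : Finset ι) (w : {x // x ∈ d} → R) (n : ι) : R :=
  if hn : n ∈ d then w ⟨n, hn⟩ else 0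

lemma extendByZero_of_notMem {d : Finset ι} (w : {x // x ∈ d} → R) {n : ι} (hn : n ∉ d) :
    extendByZero d w n = 0 :=
  dif_neg hn

variable [Fintype ι]

lemma sum_mul_extendByZero (d : Finset ι) (w : {x // x ∈ d} → R) (f : ι → R) :
    ∑ n, f n * extendByZero d w n = ∑ p : {x // x ∈ d}, f p * w p := by
  rw [← Finset.sum_subset d.subset_univ fun n _ hn => by
      rw [extendByZero_of_notMem w hn, mul_zero],
    ← Finset.sum_coe_sort]
  exact Finset.sum_congr rfl fun p _ => by rw [extendByZero, dif_pos p.2]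

omit [DecidableEq ι] in
lemma dotProduct_eq_zero_of_forall_notMem_of_forall_mem {d : Finset ι} {v x : ι → R}
    (hv : ∀ n ∉ d, v n = 0) (hx : ∀ n ∈ d, x n = 0) : v ⬝ᵥ x = 0 :=
  Finset.sum_eq_zero fun n _ => by
    by_cases hn : n ∈ d
    · rw [hx n hn, mul_zero]
    · rw [hv n hn, zero_mul]

end ExtendByZero

section PartialCov

variable {N : Type} [Fintype N] [DecidableEq N]

noncomputable def regressionCoeffs (S : Matrix N N ℝ) (d : Finset N) (k : N) :
    {x // x ∈ d} → ℝ :=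
  (S.submatrix Subtype.val Subtype.val)⁻¹ *ᵥ fun q : {x // x ∈ d} => S q k

lemma partialCov_eq_sub_sum_regressionCoeffs (S : Matrix N N ℝ) (d : Finset N) (i k : N) :
    partialCov S d i k = S i k - ∑ p : {x // x ∈ d}, S i p * regressionCoeffs S d k p := by
  simp only [partialCov, regressionCoeffs, mulVec, dotProduct, Finset.mul_sum, mul_assoc]
  rfl

noncomputable def partialCovResidual (S : Matrix N N ℝ) (d : Finset N) (k : N) : N → ℝ :=
  Pi.single k 1 - extendByZero d (regressionCoeffs S d k)

lemma mulVec_partialCovResidual (S : Matrix N N ℝ) (d : Finset N) (k n : N) :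
    (S *ᵥ partialCovResidual S d k) n = partialCov S d n k := by
  rw [partialCovResidual, mulVec_sub, Pi.sub_apply, mulVec_single_one, mulVec, dotProduct,
    sum_mul_extendByZero, partialCov_eq_sub_sum_regressionCoeffs, col_apply]

omit [Fintype N] in
lemma partialCovResidual_of_notMem (S : Matrix N N ℝ) {d : Finset N} (k : N) {n : N}
    (hn : n ∉ d) : partialCovResidual S d k n = (Pi.single k 1 : N → ℝ) n := by
  rw [partialCovResidual, Pi.sub_apply, extendByZero_of_notMem _ hn, sub_zero]

variable {S : Matrix N N ℝ}

lemma partialCov_of_mem (hS : S.PosDef) {d : Finset N} {n : N} (hn : n ∈ d) (k : N) :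
    partialCov S d n k = 0 := by
  set A := S.submatrix (Subtype.val : {x // x ∈ d} → N) Subtype.val
  have hA : IsUnit A.det := (hS.submatrix Subtype.val_injective).det_pos.ne'.isUnit
  have hsolve : A *ᵥ regressionCoeffs S d k = fun q : {x // x ∈ d} => S q k := by
    rw [regressionCoeffs, mulVec_mulVec, mul_nonsing_inv _ hA, one_mulVec]
  rw [partialCov_eq_sub_sum_regressionCoeffs, sub_eq_zero]
  exact (congrFun hsolve ⟨n, hn⟩).symm

theorem mulVec_eq_partialCov (hS : S.PosDef) {d : Finset N} {k : N} {r : N → ℝ}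
    (hr : ∀ n ∉ d, r n = (Pi.single k 1 : N → ℝ) n) (hSr : ∀ n ∈ d, (S *ᵥ r) n = 0) :
    S *ᵥ r = fun n => partialCov S d n k := by
  set v := r - partialCovResidual S d k with hv_def
  have hv : ∀ n ∉ d, v n = 0 := fun n hn => by
    rw [hv_def, Pi.sub_apply, hr n hn, partialCovResidual_of_notMem S k hn, sub_self]
  have hSv : ∀ n ∈ d, (S *ᵥ v) n = 0 := fun n hn => by
    rw [mulVec_sub, Pi.sub_apply, hSr n hn, mulVec_partialCovResidual, partialCov_of_mem hS hn,
      sub_self]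
  have hv0 : v = 0 := by
    by_contra hne
    have hpos := hS.dotProduct_mulVec_pos hne
    rw [star_trivial, dotProduct_eq_zero_of_forall_notMem_of_forall_mem hv hSv] at hpos
    exact hpos.false
  rw [← sub_add_cancel r (partialCovResidual S d k), ← hv_def, hv0, zero_add]
  exact funext (mulVec_partialCovResidual S d k)

theorem partialCov_self_pos (hS : S.PosDef) {d : Finset N} {h : N} (hh : h ∉ d) :
    0 < partialCov S d h h := by
  set r := partialCovResidual S d h with hr_def
  have hrh : r h = 1 := by rw [hr_def, partialCovResidual_of_notMem S h hh, Pi.single_eq_same]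
  have hr0 : r ≠ 0 := fun h0 => by simp [h0] at hrh
  have hquad : r ⬝ᵥ S *ᵥ r = partialCov S d h h := calc
    r ⬝ᵥ S *ᵥ r = (r - Pi.single h 1) ⬝ᵥ S *ᵥ r + Pi.single h 1 ⬝ᵥ S *ᵥ r := by
      rw [sub_dotProduct, sub_add_cancel]
    _ = partialCov S d h h := by
      rw [dotProduct_eq_zero_of_forall_notMem_of_forall_mem (d := d), zero_add,
        single_dotProduct, one_mul, mulVec_partialCovResidual]
      · intro n hn
        rw [Pi.sub_apply, hr_def, partialCovResidual_of_notMem S h hn, sub_self]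
      · intro n hn
        rw [mulVec_partialCovResidual, partialCov_of_mem hS hn]
  simpa [hquad] using hS.dotProduct_mulVec_pos hr0

theorem partialCov_insert (hS : S.PosDef) {d : Finset N} {h : N} (hh : h ∉ d) (i k : N) :
    partialCov S (insert h d) i k =
      partialCov S d i k - partialCov S d i h * partialCov S d h k / partialCov S d h h := by
  set t := partialCov S d h k / partialCov S d h h
  set r := partialCovResidual S d k - t • partialCovResidual S d h
  have hSr : ∀ n, (S *ᵥ r) n = partialCov S d n k - t * partialCov S d n h := fun n => by
    simp only [r, mulVec_sub, mulVec_smul, Pi.sub_apply, Pi.smul_apply, smul_eq_mul,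
      mulVec_partialCovResidual]
  have hr : ∀ n ∉ insert h d, r n = (Pi.single k 1 : N → ℝ) n := fun n hn => by
    rw [Finset.mem_insert, not_or] at hn
    simp [r, partialCovResidual_of_notMem S _ hn.2, Pi.single_eq_of_ne hn.1]
  have hSr_zero : ∀ n ∈ insert h d, (S *ᵥ r) n = 0 := fun n hn => by
    rw [hSr]
    rcases Finset.mem_insert.mp hn with rfl | hn
    · rw [div_mul_cancel₀ _ (partialCov_self_pos hS hh).ne', sub_self]
    · rw [partialCov_of_mem hS hn, partialCov_of_mem hS hn, mul_zero, sub_zero]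
  rw [← congrFun (mulVec_eq_partialCov hS hr hSr_zero) i, hSr, mul_comm t, mul_div_assoc]

end PartialCov

theorem partialCov_recursion_general {N : Type} [Fintype N] [DecidableEq N]
    (S : Matrix N N ℝ) (hS : S.PosDef) (d : Finset N) (i k h : N)
    (hh : h ∉ d) :
    0 < partialCov S d h h ∧
    partialCov S (insert h d) i k =
      partialCov S d i k - partialCov S d i h * partialCov S d h k / partialCov S d h h :=
  ⟨partialCov_self_pos hS hh, partialCov_insert hS hh i k⟩

/-- **Recursion relation for partial covariances.** For a real symmetric positive
definite matrix `Σ` indexed by a finite set `N`, every `d ⊆ N` and distinct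
`i, k, h ∈ N \ d`: `σ_{hh|d} > 0` and
`σ_{ik|{h}∪d} = σ_{ik|d} − σ_{ih|d} · σ_{hk|d} / σ_{hh|d}`. -/
theorem partialCov_recursion {N : Type} [Fintype N] [DecidableEq N]
    (S : Matrix N N ℝ) (hS : S.PosDef) (d : Finset N) (i k h : N)
    (hi : i ∉ d) (hk : k ∉ d) (hh : h ∉ d)
    (hik : i ≠ k) (hih : i ≠ h) (hkh : k ≠ h) :
    0 < partialCov S d h h ∧
    partialCov S (insert h d) i k =
      partialCov S d i k - partialCov S d i h * partialCov S d h k / partialCov S d h h :=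
  partialCov_recursion_general S hS d i k h hh
end

section
/- Let d ≥ 2, let B be a real d × d orthogonal matrix (B Bᵀ = I) all of whose entries are nonzero, and let ω > 1 and κ > ω + 1. Consider the 2d × 2d block matrix Σ = [[κ I, B], [Bᵀ, ω I]] indexed by u ∪ v, where u indexes the first d rows/columns and v the last d. Then: (1) Σ is symmetric positive definite; (2) the conditional covariance matrices are scalar, Σ_{uu|v} = (κ − 1/ω) I and Σ_{vv|u} = (ω − 1/κ) I, hence diagonal; (3) consequently, for every partition of v into nonempty disjoint sets a and b, one has Σ_{ab} = 0 and (Σ_{vv|u})_{ab} = 0, while σ_{ij} ≠ 0 for every i ∈ v and j ∈ u. Thus the regular Gaussian family with covariance Σ satisfies a ⫫ b and a ⫫ b | u but neither a ⫫ u nor b ⫫ u, violating set transitivity. -/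
open Matrix
open scoped ComplexOrder

/- Proof idea: the Schur complement of `κ I` in `Σ` is `ω I - Bᵀ B / κ = (ω - 1/κ) I` because `B`
is orthogonal, and it is positive definite as `1/κ < 1 < ω`; the same computation gives
`Σ_{uu|v}`. Being scalar, both conditional covariances vanish off the diagonal, whereas the
cross-covariance block `Bᵀ` has no zero entry. -/

namespace Matrix

theorem posDef_fromBlocks₁₁ {𝕜 m n : Type*} [RCLike 𝕜] [Fintype m] [Fintype n]
    [DecidableEq m] [DecidableEq n] {A : Matrix m m 𝕜} (B : Matrix m n 𝕜) (D : Matrix n n 𝕜)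
    (hA : A.PosDef) (hSchur : (D - Bᴴ * A⁻¹ * B).PosDef) :
    (fromBlocks A B Bᴴ D).PosDef := by
  let := hA.isUnit.invertible
  have hsemidef := (PosDef.fromBlocks₁₁ B D hA).mpr hSchur.posSemidef
  refine hsemidef.posDef_iff_det_ne_zero.mpr ?_
  rw [det_fromBlocks₁₁, invOf_eq_nonsing_inv]
  exact mul_ne_zero hA.det_pos.ne' hSchur.det_pos.ne'

variable {K n : Type*} [Field K] [Fintype n] [DecidableEq n]

theorem inv_smul_one (c : K) : (c • (1 : Matrix n n K))⁻¹ = c⁻¹ • 1 := by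
  rcases eq_or_ne c 0 with rfl | hc
  · simp
  · exact inv_eq_right_inv (by rw [smul_mul_smul_comm, mul_inv_cancel₀ hc, one_mul, one_smul])

theorem smul_one_sub_mul_inv_smul_one_mul {B C : Matrix n n K} (hBC : B * C = 1) (a b : K) :
    a • (1 : Matrix n n K) - B * (b • 1)⁻¹ * C = (a - 1 / b) • 1 := by
  rw [inv_smul_one, mul_smul_one, smul_mul, hBC, sub_smul, one_div]

end Matrix

theorem gaussian_family_violating_set_transitivity_general
    (d : ℕ) (B : Matrix (Fin d) (Fin d) ℝ)
    (hB : B * Bᵀ = 1) (hBne : ∀ i j, B i j ≠ 0)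
    (ω κ : ℝ) (hω : 1 < ω) (hκ : ω + 1 < κ)
    (S : Matrix (Fin d ⊕ Fin d) (Fin d ⊕ Fin d) ℝ)
    (hS : S = Matrix.fromBlocks (κ • 1) B Bᵀ (ω • 1)) :
    S.PosDef ∧
    (κ • (1 : Matrix (Fin d) (Fin d) ℝ) - B * (ω • (1 : Matrix (Fin d) (Fin d) ℝ))⁻¹ * Bᵀ
        = (κ - 1 / ω) • 1) ∧
    (ω • (1 : Matrix (Fin d) (Fin d) ℝ) - Bᵀ * (κ • (1 : Matrix (Fin d) (Fin d) ℝ))⁻¹ * B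
        = (ω - 1 / κ) • 1) ∧
    (∀ a b : Finset (Fin d), a.Nonempty → b.Nonempty → Disjoint a b →
      a ∪ b = Finset.univ →
      (∀ i ∈ a, ∀ j ∈ b, S (Sum.inr i) (Sum.inr j) = 0) ∧
      (∀ i ∈ a, ∀ j ∈ b,
        (ω • (1 : Matrix (Fin d) (Fin d) ℝ) - Bᵀ * (κ • (1 : Matrix (Fin d) (Fin d) ℝ))⁻¹ * B)
          i j = 0)) ∧
    (∀ i j : Fin d, S (Sum.inr i) (Sum.inl j) ≠ 0) := by
  have hκ₀ : 0 < κ := by linarith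
  have hSchur_v := smul_one_sub_mul_inv_smul_one_mul (mul_eq_one_comm.mp hB) ω κ
  have hscalar : ∀ {c : ℝ}, 0 < c → (c • (1 : Matrix (Fin d) (Fin d) ℝ)).PosDef :=
    PosDef.one.smul
  have hSchur_v_pos : 0 < ω - 1 / κ := by
    have : 1 / κ < 1 := (div_lt_one hκ₀).mpr (by linarith)
    linarith
  have hPD : S.PosDef := by
    rw [hS, ← conjTranspose_eq_transpose_of_trivial]
    refine posDef_fromBlocks₁₁ B _ (hscalar hκ₀) ?_
    rw [conjTranspose_eq_transpose_of_trivial, hSchur_v]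
    exact hscalar hSchur_v_pos
  refine ⟨hPD, smul_one_sub_mul_inv_smul_one_mul hB κ ω, hSchur_v, ?_, ?_⟩
  · intro a b _ _ hab _
    have hne : ∀ i ∈ a, ∀ j ∈ b, i ≠ j := fun i hi j hj h =>
      Finset.disjoint_left.mp hab hi (h ▸ hj)
    refine ⟨fun i hi j hj => ?_, fun i hi j hj => ?_⟩
    · simp [hS, one_apply_ne (hne i hi j hj)]
    · rw [hSchur_v]
      simp [one_apply_ne (hne i hi j hj)]
  · intro i j
    simpa [hS] using hBne j i

/-- **A regular Gaussian family violating set transitivity.** Let `d ≥ 2`, let `B` be a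
real `d × d` orthogonal matrix (`B * Bᵀ = 1`) all of whose entries are nonzero, and let
`ω > 1`, `κ > ω + 1`. For the `2d × 2d` block matrix `Σ = [[κ I, B], [Bᵀ, ω I]]` indexed
by `u ⊕ v` (with `u = Sum.inl`, `v = Sum.inr`):
(1) `Σ` is (symmetric) positive definite;
(2) the conditional covariance matrices are scalar:
`Σ_{uu|v} = κ I − B (ω I)⁻¹ Bᵀ = (κ − 1/ω) I` and
`Σ_{vv|u} = ω I − Bᵀ (κ I)⁻¹ B = (ω − 1/κ) I`, hence diagonal;
(3) for every partition of `v` into nonempty disjoint `a`, `b`: all entries `Σ_{ab}` are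
zero and all `a × b` entries of `Σ_{vv|u}` are zero (so `a ⫫ b` and `a ⫫ b | u`), while
every entry `σ_{ij}` with `i ∈ v`, `j ∈ u` is nonzero (so neither `a ⫫ u` nor `b ⫫ u`):
set transitivity is violated. -/
theorem gaussian_family_violating_set_transitivity
    (d : ℕ) (hd : 2 ≤ d) (B : Matrix (Fin d) (Fin d) ℝ)
    (hB : B * Bᵀ = 1) (hBne : ∀ i j, B i j ≠ 0)
    (ω κ : ℝ) (hω : 1 < ω) (hκ : ω + 1 < κ)
    (S : Matrix (Fin d ⊕ Fin d) (Fin d ⊕ Fin d) ℝ)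
    (hS : S = Matrix.fromBlocks (κ • 1) B Bᵀ (ω • 1)) :
    S.PosDef ∧
    (κ • (1 : Matrix (Fin d) (Fin d) ℝ) - B * (ω • (1 : Matrix (Fin d) (Fin d) ℝ))⁻¹ * Bᵀ
        = (κ - 1 / ω) • 1) ∧
    (ω • (1 : Matrix (Fin d) (Fin d) ℝ) - Bᵀ * (κ • (1 : Matrix (Fin d) (Fin d) ℝ))⁻¹ * B
        = (ω - 1 / κ) • 1) ∧
    (∀ a b : Finset (Fin d), a.Nonempty → b.Nonempty → Disjoint a b →
      a ∪ b = Finset.univ →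
      (∀ i ∈ a, ∀ j ∈ b, S (Sum.inr i) (Sum.inr j) = 0) ∧
      (∀ i ∈ a, ∀ j ∈ b,
        (ω • (1 : Matrix (Fin d) (Fin d) ℝ) - Bᵀ * (κ • (1 : Matrix (Fin d) (Fin d) ℝ))⁻¹ * B)
          i j = 0)) ∧
    (∀ i j : Fin d, S (Sum.inr i) (Sum.inl j) ≠ 0) :=
  gaussian_family_violating_set_transitivity_general d B hB hBne ω κ hω hκ S hS
end

section
/- Fix α > 1 and define a probability distribution on {1,2} × {1,2} × {1,2,3} for variables (A, B, C) by π_{ijk} = t_{ijk} / (4(1 + α + α²)), where t_{111} = α², t_{121} = α, t_{211} = α, t_{221} = 1; t_{112} = α, t_{122} = 1, t_{212} = α², t_{222} = α; t_{113} = 1, t_{123} = α², t_{213} = 1, t_{223} = α². Then the π_{ijk} sum to 1, and the distribution satisfies A ⫫ B | C and A ⫫ B, yet A ⋔ C and B ⋔ C. Hence this family of distributions violates singleton transitivity. -/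
/-- The table of unnormalized weights `t_{ijk}` (adapted from Birch, 1963);
indices `0, 1 : Fin 2` stand for levels `i, j = 1, 2` and `0, 1, 2 : Fin 3`
for levels `k = 1, 2, 3`. -/
noncomputable def t8 (α : ℝ) (i j : Fin 2) (k : Fin 3) : ℝ :=
  if k = 0 then
    (if i = 0 then (if j = 0 then α ^ 2 else α) else (if j = 0 then α else 1))
  else if k = 1 then
    (if i = 0 then (if j = 0 then α else 1) else (if j = 0 then α ^ 2 else α))
  else
    (if j = 0 then 1 else α ^ 2)

/-- The joint probabilities `π_{ijk} = t_{ijk} / (4 (1 + α + α²))`. -/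
noncomputable def π8 (α : ℝ) (i j : Fin 2) (k : Fin 3) : ℝ :=
  t8 α i j k / (4 * (1 + α + α ^ 2))

/-- Marginal probability of `A = i`. -/
noncomputable def pA8 (α : ℝ) (i : Fin 2) : ℝ := ∑ j, ∑ k, π8 α i j k
/-- Marginal probability of `B = j`. -/
noncomputable def pB8 (α : ℝ) (j : Fin 2) : ℝ := ∑ i, ∑ k, π8 α i j k
/-- Marginal probability of `C = k`. -/
noncomputable def pC8 (α : ℝ) (k : Fin 3) : ℝ := ∑ i, ∑ j, π8 α i j k
/-- Marginal probability of `A = i, B = j`. -/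
noncomputable def pAB8 (α : ℝ) (i j : Fin 2) : ℝ := ∑ k, π8 α i j k
/-- Marginal probability of `A = i, C = k`. -/
noncomputable def pAC8 (α : ℝ) (i : Fin 2) (k : Fin 3) : ℝ := ∑ j, π8 α i j k
/-- Marginal probability of `B = j, C = k`. -/
noncomputable def pBC8 (α : ℝ) (j : Fin 2) (k : Fin 3) : ℝ := ∑ i, π8 α i j k

/-!
Every `(A, B)` cell carries total weight `1 + α + α²`, so `(A, B)` is uniform and `A ⫫ B`;
every slice `C = k` is a rank-one table, so `A ⫫ B | C`. But `P(A = 1, C = 1)` is proportional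
to `α (α + 1)` while `P(A = 1) P(C = 1)` is proportional to `(α + 1)² / 2`, and these agree only
for `α = ±1`; the same holds for `B` by symmetry of the first slice.
-/

theorem mul_sum_sum_eq_sum_mul_sum_of_eq_mul {ι κ R : Type*} [Fintype ι] [Fintype κ]
    [CommSemiring R] {P : ι → κ → R} (f : ι → R) (g : κ → R) (hP : ∀ i j, P i j = f i * g j)
    (i : ι) (j : κ) :
    P i j * ∑ i', ∑ j', P i' j' = (∑ j', P i j') * ∑ i', P i' j := by
  simp only [hP, ← Finset.mul_sum, ← Finset.sum_mul]
  ring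

section Table

variable (α : ℝ)

theorem one_add_self_add_sq_pos : 0 < 1 + α + α ^ 2 := by
  nlinarith [sq_nonneg (α + 1 / 2)]

theorem t8_eq_mul (i j : Fin 2) (k : Fin 3) :
    t8 α i j k = ![![α, 1, 1], ![1, α, 1]] i k * ![![α, α, 1], ![1, 1, α ^ 2]] j k := by
  fin_cases i <;> fin_cases j <;> fin_cases k <;> simp [t8] <;> ring

theorem sum_t8 (i j : Fin 2) : ∑ k, t8 α i j k = 1 + α + α ^ 2 := by
  fin_cases i <;> fin_cases j <;> simp [t8, Fin.sum_univ_three] <;> ring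

theorem pAB8_eq (i j : Fin 2) : pAB8 α i j = 1 / 4 := by
  have hD := (one_add_self_add_sq_pos α).ne'
  simp only [pAB8, π8, ← Finset.sum_div, sum_t8]
  field_simp

theorem pA8_eq (i : Fin 2) : pA8 α i = 1 / 2 := by
  change ∑ j, pAB8 α i j = 1 / 2
  simp only [pAB8_eq, Fin.sum_univ_two]
  norm_num

theorem pB8_eq (j : Fin 2) : pB8 α j = 1 / 2 := by
  change ∑ i, pAB8 α i j = 1 / 2
  simp only [pAB8_eq, Fin.sum_univ_two]
  norm_num

theorem sum_π8 : ∑ i, ∑ j, ∑ k, π8 α i j k = 1 := by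
  change ∑ i, pA8 α i = 1
  simp only [pA8_eq, Fin.sum_univ_two]
  norm_num

theorem π8_mul_pC8 (i j : Fin 2) (k : Fin 3) :
    π8 α i j k * pC8 α k = pAC8 α i k * pBC8 α j k :=
  mul_sum_sum_eq_sum_mul_sum_of_eq_mul (P := fun i j => π8 α i j k)
    (fun i => ![![α, 1, 1], ![1, α, 1]] i k / (4 * (1 + α + α ^ 2)))
    (fun j => ![![α, α, 1], ![1, 1, α ^ 2]] j k)
    (fun i j => by rw [π8, t8_eq_mul, div_mul_eq_mul_div]) i j

theorem pC8_zero : pC8 α 0 = (α + 1) ^ 2 / (4 * (1 + α + α ^ 2)) := by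
  simp only [pC8, π8, ← Finset.sum_div, Fin.sum_univ_two, t8, ↓reduceIte,
    one_ne_zero]
  ring

theorem pAC8_zero_zero : pAC8 α 0 0 = α * (α + 1) / (4 * (1 + α + α ^ 2)) := by
  simp only [pAC8, π8, ← Finset.sum_div, Fin.sum_univ_two, t8, ↓reduceIte,
    one_ne_zero]
  ring

theorem pBC8_zero_zero : pBC8 α 0 0 = α * (α + 1) / (4 * (1 + α + α ^ 2)) := by
  simp only [pBC8, π8, ← Finset.sum_div, Fin.sum_univ_two, t8, ↓reduceIte,
    one_ne_zero]
  ring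

variable {α}

theorem half_mul_pC8_zero_ne (hα : 1 < α) :
    1 / 2 * pC8 α 0 ≠ α * (α + 1) / (4 * (1 + α + α ^ 2)) := by
  have hD : 4 * (1 + α + α ^ 2) ≠ 0 := by positivity [one_add_self_add_sq_pos α]
  rw [pC8_zero, mul_div_assoc', Ne, div_left_inj' hD]
  nlinarith

end Table

/-- **A family of distributions violating singleton transitivity** (Table 1).
For `α > 1`, the probabilities `π_{ijk}` sum to `1` and the distribution satisfies
`A ⫫ B | C` and `A ⫫ B`, yet `A ⋔ C` and `B ⋔ C`; hence singleton transitivity fails. -/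
theorem family_violating_singleton_transitivity (α : ℝ) (hα : 1 < α) :
    ((∑ i, ∑ j, ∑ k, π8 α i j k) = 1) ∧
    (∀ i j k, π8 α i j k * pC8 α k = pAC8 α i k * pBC8 α j k) ∧
    (∀ i j, pAB8 α i j = pA8 α i * pB8 α j) ∧
    ¬ (∀ i k, pAC8 α i k = pA8 α i * pC8 α k) ∧
    ¬ (∀ j k, pBC8 α j k = pB8 α j * pC8 α k) := by
  refine ⟨sum_π8 α, π8_mul_pC8 α, fun i j => ?_, fun h => ?_, fun h => ?_⟩
  · rw [pAB8_eq, pA8_eq, pB8_eq]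
    norm_num
  · exact half_mul_pC8_zero_ne hα (by rw [← pA8_eq α 0, ← pAC8_zero_zero, h])
  · exact half_mul_pC8_zero_ne hα (by rw [← pB8_eq α 0, ← pBC8_zero_zero, h])
end

section
/- Let P be a probability distribution on {0,1} × {0,1} × {0,1} with coordinate variables A, B, C. If P satisfies A ⫫ B | C and A ⫫ C | B but violates A ⫫ (B, C), then B and C are almost surely identical up to relabeling: either P(B = C) = 1 or P(B = 1 − C) = 1. That is, for three binary variables, violation of the intersection property coincides with the degenerate case of two of the variables being identical. -/
/-- Marginal probability of `A = a`. -/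
noncomputable def qA (P : Fin 2 × Fin 2 × Fin 2 → ℝ) (a : Fin 2) : ℝ :=
  ∑ b, ∑ c, P (a, b, c)
/-- Marginal probability of `B = b`. -/
noncomputable def qB (P : Fin 2 × Fin 2 × Fin 2 → ℝ) (b : Fin 2) : ℝ :=
  ∑ a, ∑ c, P (a, b, c)
/-- Marginal probability of `C = c`. -/
noncomputable def qC (P : Fin 2 × Fin 2 × Fin 2 → ℝ) (c : Fin 2) : ℝ :=
  ∑ a, ∑ b, P (a, b, c)
/-- Marginal probability of `A = a, B = b`. -/
noncomputable def qAB (P : Fin 2 × Fin 2 × Fin 2 → ℝ) (a b : Fin 2) : ℝ :=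
  ∑ c, P (a, b, c)
/-- Marginal probability of `A = a, C = c`. -/
noncomputable def qAC (P : Fin 2 × Fin 2 × Fin 2 → ℝ) (a c : Fin 2) : ℝ :=
  ∑ b, P (a, b, c)
/-- Marginal probability of `B = b, C = c`. -/
noncomputable def qBC (P : Fin 2 × Fin 2 × Fin 2 → ℝ) (b c : Fin 2) : ℝ :=
  ∑ a, P (a, b, c)

/-!
Write `q(b, c)` for the law of `(B, C)`. Each of the two conditional independences, cleared of
denominators, says that `P(a, x) q(y) = P(a, y) q(x)` for cells `x`, `y` of `(B, C)` in a common
column (resp. row) of positive `C`- (resp. `B`-)mass; this relation is transitive through cells of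
positive mass and holds trivially at null cells. If neither `B = C` nor `B = 1 - C` holds almost
surely, there is a positive diagonal cell `(d, d)` and a positive antidiagonal cell `(u, 1 - u)`;
in a `2 × 2` grid every cell shares a row or column with one of them, and they share one with each
other. Hence `P(a, x) q(d, d) = P(a, d, d) q(x)` for every cell `x`, and summing over `x` gives
`P(a, x) = P(a) q(x)`.
-/

open Finset

/-- `A` has the same conditional law given `(B, C) = x` and given `(B, C) = y`, stated without
division so that it also makes sense at cells of probability zero. -/
def SameConditional (P : Fin 2 × Fin 2 × Fin 2 → ℝ) (x y : Fin 2 × Fin 2) : Prop :=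
  ∀ a, P (a, x) * qBC P y.1 y.2 = P (a, y) * qBC P x.1 x.2

lemma fin_two_eq_or_sub_eq (u d : Fin 2) : u = d ∨ 1 - u = d := by
  revert u d; decide

lemma fin_two_cell_linked (b c d u : Fin 2) : (b = u ∨ c = 1 - u) ∨ (b = d ∨ c = d) := by
  revert b c d u; decide

section

variable {P : Fin 2 × Fin 2 × Fin 2 → ℝ}

lemma qBC_nonneg (hnn : ∀ x, 0 ≤ P x) (b c : Fin 2) : 0 ≤ qBC P b c :=
  sum_nonneg fun a _ => hnn (a, b, c)

lemma le_qBC (hnn : ∀ x, 0 ≤ P x) (a b c : Fin 2) : P (a, b, c) ≤ qBC P b c :=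
  single_le_sum (fun a _ => hnn (a, b, c)) (mem_univ a)

lemma qBC_le_qB (hnn : ∀ x, 0 ≤ P x) (b c : Fin 2) : qBC P b c ≤ qB P b := by
  rw [qB, sum_comm]
  exact single_le_sum (fun c _ => qBC_nonneg hnn b c) (mem_univ c)

lemma qBC_le_qC (hnn : ∀ x, 0 ≤ P x) (b c : Fin 2) : qBC P b c ≤ qC P c := by
  rw [qC, sum_comm]
  exact single_le_sum (fun b _ => qBC_nonneg hnn b c) (mem_univ b)

lemma sum_qBC (hsum : ∑ x, P x = 1) : ∑ x : Fin 2 × Fin 2, qBC P x.1 x.2 = 1 := by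
  rw [Fintype.sum_prod_type, sum_comm] at hsum
  exact hsum

lemma sum_diag_add_sum_antidiag (hsum : ∑ x, P x = 1) :
    (∑ a, ∑ b, P (a, b, b)) + ∑ a, ∑ b, P (a, b, 1 - b) = 1 := by
  rw [← sum_qBC hsum]
  have h1 : (1 : Fin 2) - 0 = 1 := rfl
  have h0 : (1 : Fin 2) - 1 = 0 := rfl
  simp only [qBC, Fintype.sum_prod_type, Fin.sum_univ_two, h1, h0]
  ring

lemma exists_pos_qBC (hnn : ∀ x, 0 ≤ P x) (f : Fin 2 → Fin 2)
    (h : ∑ a, ∑ b, P (a, b, f b) ≠ 0) : ∃ b, 0 < qBC P b (f b) := by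
  rw [sum_comm] at h
  obtain ⟨b, -, hb⟩ := exists_ne_zero_of_sum_ne_zero h
  exact ⟨b, (qBC_nonneg hnn b (f b)).lt_of_ne' hb⟩

lemma SameConditional.trans {x y z : Fin 2 × Fin 2} (hy : 0 < qBC P y.1 y.2)
    (hxy : SameConditional P x y) (hyz : SameConditional P y z) : SameConditional P x z :=
  fun a => mul_right_cancel₀ hy.ne' <| by
    linear_combination qBC P z.1 z.2 * hxy a + qBC P x.1 x.2 * hyz a

lemma sameConditional_of_qBC_eq_zero (hnn : ∀ x, 0 ≤ P x) {x : Fin 2 × Fin 2}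
    (hx : qBC P x.1 x.2 = 0) (y : Fin 2 × Fin 2) : SameConditional P x y := by
  intro a
  have hPx : P (a, x) = 0 := le_antisymm (hx ▸ le_qBC hnn a x.1 x.2) (hnn _)
  rw [hPx, hx, zero_mul, mul_zero]

lemma sameConditional_of_condIndep_C
    (hABgC : ∀ a b c, P (a, b, c) * qC P c = qAC P a c * qBC P b c)
    {b b' c : Fin 2} (hc : qC P c ≠ 0) : SameConditional P (b, c) (b', c) :=
  fun a => mul_right_cancel₀ hc <| by
    linear_combination qBC P b' c * hABgC a b c - qBC P b c * hABgC a b' c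

lemma sameConditional_of_condIndep_B
    (hACgB : ∀ a b c, P (a, b, c) * qB P b = qAB P a b * qBC P b c)
    {b c c' : Fin 2} (hb : qB P b ≠ 0) : SameConditional P (b, c) (b, c') :=
  fun a => mul_right_cancel₀ hb <| by
    linear_combination qBC P b c' * hACgB a b c - qBC P b c * hACgB a b c'

lemma sameConditional_of_linked (hnn : ∀ x, 0 ≤ P x)
    (hABgC : ∀ a b c, P (a, b, c) * qC P c = qAC P a c * qBC P b c)
    (hACgB : ∀ a b c, P (a, b, c) * qB P b = qAB P a b * qBC P b c)
    {x y : Fin 2 × Fin 2} (hx : 0 < qBC P x.1 x.2) (hxy : x.1 = y.1 ∨ x.2 = y.2) :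
    SameConditional P x y := by
  obtain ⟨b, c⟩ := x
  obtain ⟨b', c'⟩ := y
  rcases hxy with rfl | rfl
  · exact sameConditional_of_condIndep_B hACgB (hx.trans_le (qBC_le_qB hnn b c)).ne'
  · exact sameConditional_of_condIndep_C hABgC (hx.trans_le (qBC_le_qC hnn b c)).ne'

lemma sameConditional_diag (hnn : ∀ x, 0 ≤ P x)
    (hABgC : ∀ a b c, P (a, b, c) * qC P c = qAC P a c * qBC P b c)
    (hACgB : ∀ a b c, P (a, b, c) * qB P b = qAB P a b * qBC P b c)
    {d u : Fin 2} (hu : 0 < qBC P u (1 - u)) (x : Fin 2 × Fin 2) :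
    SameConditional P x (d, d) := by
  rcases (qBC_nonneg hnn x.1 x.2).eq_or_lt with hx | hx
  · exact sameConditional_of_qBC_eq_zero hnn hx.symm _
  have hud : SameConditional P (u, 1 - u) (d, d) :=
    sameConditional_of_linked hnn hABgC hACgB hu (fin_two_eq_or_sub_eq u d)
  rcases fin_two_cell_linked x.1 x.2 d u with hxu | hxd
  · exact (sameConditional_of_linked hnn hABgC hACgB hx hxu).trans hu hud
  · exact sameConditional_of_linked hnn hABgC hACgB hx hxd

lemma eq_qA_mul_qBC_of_sameConditional (hsum : ∑ x, P x = 1) {y : Fin 2 × Fin 2}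
    (hy : 0 < qBC P y.1 y.2) (h : ∀ x, SameConditional P x y) (a b c : Fin 2) :
    P (a, b, c) = qA P a * qBC P b c := by
  have hA : qA P a * qBC P y.1 y.2 = P (a, y) :=
    calc qA P a * qBC P y.1 y.2 = ∑ x : Fin 2 × Fin 2, P (a, x) * qBC P y.1 y.2 := by
          rw [qA, ← Fintype.sum_prod_type', sum_mul]
      _ = P (a, y) * ∑ x : Fin 2 × Fin 2, qBC P x.1 x.2 := by
          rw [mul_sum]
          exact sum_congr rfl fun x _ => h x a
      _ = P (a, y) := by rw [sum_qBC hsum, mul_one]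
  exact mul_right_cancel₀ hy.ne' <| by
    linear_combination h (b, c) a - qBC P b c * hA

end

/-- The conditional independences are stated in the product forms `P(abc)·P(c) = P(ac)·P(bc)`
and `P(abc)·P(b) = P(ab)·P(bc)`, which are equivalent to them and need no division. -/
theorem binary_intersection_violation_degenerate
    (P : Fin 2 × Fin 2 × Fin 2 → ℝ)
    (hnn : ∀ x, 0 ≤ P x) (hsum : (∑ x, P x) = 1)
    (hABgC : ∀ a b c, P (a, b, c) * qC P c = qAC P a c * qBC P b c)
    (hACgB : ∀ a b c, P (a, b, c) * qB P b = qAB P a b * qBC P b c)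
    (hdep : ¬ ∀ a b c, P (a, b, c) = qA P a * qBC P b c) :
    ((∑ a, ∑ b, P (a, b, b)) = 1) ∨ ((∑ a, ∑ b, P (a, b, 1 - b)) = 1) := by
  by_contra hcon
  obtain ⟨hdiag, hanti⟩ := not_or.mp hcon
  have htotal := sum_diag_add_sum_antidiag hsum
  obtain ⟨d, hd⟩ := exists_pos_qBC hnn (fun b => b) fun h => hanti (by linarith)
  obtain ⟨u, hu⟩ := exists_pos_qBC hnn (fun b => 1 - b) fun h => hdiag (by linarith)
  exact hdep (eq_qA_mul_qBC_of_sameConditional hsum hd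
    (sameConditional_diag hnn hABgC hACgB hu))
end

section
/- Let N be a finite set, F a binary edge matrix on N, and a ⊆ N. Then: (1) partial closure never removes edges and cannot be undone: F_{jk} = 1 implies (zer_a F)_{jk} = 1 for all j, k, and zer_a (zer_a F) = zer_a F; (2) partial closure is exchangeable with selecting a submatrix: for any s with a ⊆ s ⊆ N, the restriction of zer_a F to s × s equals zer_a applied to the restriction of F to s × s. -/
/-- The single-node partial closure operator: `(zer_i F)_{jk} = 1` iff
`F_{jk} = 1` or (`F_{ji} = 1` and `F_{ik} = 1`). -/
def zerStep {N : Type} (i : N) (F : N → N → Bool) : N → N → Bool :=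
  fun j k => F j k || (F j i && F i k)

/-- Partial closure with respect to the nodes of a list, applied in order. -/
def zerList {N : Type} (l : List N) (F : N → N → Bool) : N → N → Bool :=
  l.foldr zerStep F

/-- Partial closure `zer_a F` with respect to a finite set `a` of nodes
(applying `zer_i` for the nodes `i ∈ a` in some enumeration). -/
noncomputable def zerFinset {N : Type} (a : Finset N) (F : N → N → Bool) : N → N → Bool :=
  zerList a.toList F

/-! Each `zer_i` is idempotent and any two of them commute, so `zer_a` is a commuting product
of idempotents; everything else is bookkeeping about the enumeration of `a`. In particular
`zer_a` only ever evaluates `F` at pairs of nodes involved in the query or lying in `a`, which is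
why it commutes with restriction to any `s ⊇ a`. -/

section

variable {N : Type}

lemma zerStep_comm (i j : N) (F : N → N → Bool) :
    zerStep i (zerStep j F) = zerStep j (zerStep i F) := by
  funext x y
  simp only [zerStep]
  grind

lemma zerStep_idem (i : N) (F : N → N → Bool) : zerStep i (zerStep i F) = zerStep i F := by
  funext x y
  simp only [zerStep]
  grind

lemma zerStep_of_eq_true {i j k : N} {F : N → N → Bool} (h : F j k = true) :
    zerStep i F j k = true := by
  simp [zerStep, h]

@[simp]
lemma zerList_cons (i : N) (l : List N) (F : N → N → Bool) :
    zerList (i :: l) F = zerStep i (zerList l F) := rfl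

lemma zerList_zerStep (l : List N) (i : N) (F : N → N → Bool) :
    zerList l (zerStep i F) = zerStep i (zerList l F) := by
  induction l with
  | nil => rfl
  | cons b l ih => rw [zerList_cons, zerList_cons, ih, zerStep_comm]

lemma zerList_of_eq_true (l : List N) {F : N → N → Bool} {j k : N} (h : F j k = true) :
    zerList l F j k = true := by
  induction l with
  | nil => exact h
  | cons b l ih => exact zerStep_of_eq_true ih

lemma zerList_idem (l : List N) (F : N → N → Bool) : zerList l (zerList l F) = zerList l F := by
  induction l with
  | nil => rfl
  | cons b l ih => rw [zerList_cons, zerList_cons, zerList_zerStep, zerStep_idem, ih]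

lemma zerList_perm {l₁ l₂ : List N} (h : l₁.Perm l₂) (F : N → N → Bool) :
    zerList l₁ F = zerList l₂ F := by
  induction h with
  | nil => rfl
  | cons x _ ih => rw [zerList_cons, zerList_cons, ih]
  | swap x y l => simp only [zerList_cons, zerStep_comm]
  | trans _ _ ih₁ ih₂ => rw [ih₁, ih₂]

lemma zerList_map_val {p : N → Prop} (l : List (Subtype p)) (F : N → N → Bool) :
    (fun j k : Subtype p => zerList (l.map Subtype.val) F j k) =
      zerList l (fun j k => F j k) := by
  induction l with
  | nil => rfl
  | cons b l ih => rw [List.map_cons, zerList_cons, zerList_cons, ← ih]; rfl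

lemma zerFinset_of_eq_true (a : Finset N) {F : N → N → Bool} {j k : N} (h : F j k = true) :
    zerFinset a F j k = true :=
  zerList_of_eq_true _ h

lemma zerFinset_idem (a : Finset N) (F : N → N → Bool) :
    zerFinset a (zerFinset a F) = zerFinset a F :=
  zerList_idem _ F

lemma zerFinset_eq_zerList_of_perm {a : Finset N} {l : List N} (h : l.Perm a.toList)
    (F : N → N → Bool) : zerFinset a F = zerList l F :=
  (zerList_perm h F).symm

lemma zerFinset_map_subtype {p : N → Prop} (b : Finset (Subtype p)) (F : N → N → Bool) :
    (fun j k : Subtype p => zerFinset (b.map (Function.Embedding.subtype p)) F j k) =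
      zerFinset b (fun j k => F j k) := by
  have hperm : (b.toList.map Subtype.val).Perm (b.map (Function.Embedding.subtype p)).toList := by
    rw [← Multiset.coe_eq_coe, ← Multiset.map_coe, Finset.coe_toList, Finset.coe_toList,
      Finset.map_val]
    rfl
  rw [zerFinset_eq_zerList_of_perm hperm]
  exact zerList_map_val b.toList F

end

theorem zer_basic_properties_general {N : Type} [DecidableEq N]
    (F : N → N → Bool) (a : Finset N) :
    (∀ j k, F j k = true → zerFinset a F j k = true) ∧
    (zerFinset a (zerFinset a F) = zerFinset a F) ∧
    (∀ s : Finset N, a ⊆ s →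
      (fun (j k : {x // x ∈ s}) => zerFinset a F j.1 k.1) =
        zerFinset (s.attach.filter (fun x => x.1 ∈ a))
          (fun (j k : {x // x ∈ s}) => F j.1 k.1)) := by
  refine ⟨fun j k => zerFinset_of_eq_true a, zerFinset_idem a F, fun s hs => ?_⟩
  have ha : (s.attach.filter (fun x => x.1 ∈ a)).map (Function.Embedding.subtype _) = a := by
    ext x
    simpa using fun hx => hs hx
  rw [← zerFinset_map_subtype, ha]

/-- **Basic properties of partial closure** (Wermuth, Wiedenbeck and Cox, 2006).
For a binary edge matrix `F` on a finite set `N` (ones on the diagonal) and `a ⊆ N`: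
(1) partial closure never removes edges, and cannot be undone:
`F_{jk} = 1` implies `(zer_a F)_{jk} = 1`, and `zer_a (zer_a F) = zer_a F`;
(2) partial closure is exchangeable with selecting a submatrix: for `a ⊆ s ⊆ N`,
the restriction of `zer_a F` to `s × s` equals `zer_a` applied to the restriction
of `F` to `s × s`. -/
theorem zer_basic_properties {N : Type} [Fintype N] [DecidableEq N]
    (F : N → N → Bool) (hF : ∀ i, F i i = true) (a : Finset N) :
    (∀ j k, F j k = true → zerFinset a F j k = true) ∧
    (zerFinset a (zerFinset a F) = zerFinset a F) ∧
    (∀ s : Finset N, a ⊆ s →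
      (fun (j k : {x // x ∈ s}) => zerFinset a F j.1 k.1) =
        zerFinset (s.attach.filter (fun x => x.1 ∈ a))
          (fun (j k : {x // x ∈ s}) => F j.1 k.1)) :=
  zer_basic_properties_general F a
end

section
/- Let N be a finite set, F a binary edge matrix on N, and a ⊆ N. For all i, k in N, the entry (zer_a F)_{ik} equals 1 if and only if there exist m ≥ 1 and nodes i = j_0, j_1, ..., j_m = k with all inner nodes j_1, ..., j_{m−1} belonging to a and F_{j_{t−1} j_t} = 1 for every t = 1, ..., m. That is, partial closure with respect to a closes exactly the a-line paths of the graph represented by F. -/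
/-! Inserting a node `i` into the set `S` of admissible inner nodes adds exactly the paths
through `i`: cutting an `insert i S`-line path at the first and the last visit of `i` leaves
two `S`-line paths. Since `zer_i` adds exactly the composites through `i`, induction on the
enumeration of `a` identifies `zer_a F` with the `a`-line path relation. -/

section LinePath

variable {N : Type} (r : N → N → Prop)

def HasLinePath (S : Set N) (j k : N) : Prop :=
  ∃ p : List N, (∀ x ∈ p, x ∈ S) ∧ List.IsChain r (j :: (p ++ [k]))

variable {r}

theorem HasLinePath.of_rel {S : Set N} {j k : N} (h : r j k) : HasLinePath r S j k :=
  ⟨[], by simp, List.isChain_pair.mpr h⟩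

theorem hasLinePath_empty {j k : N} : HasLinePath r ∅ j k ↔ r j k := by
  refine ⟨?_, HasLinePath.of_rel⟩
  rintro ⟨p, hp, hc⟩
  obtain rfl : p = [] := List.eq_nil_iff_forall_not_mem.mpr hp
  exact List.isChain_pair.mp hc

theorem HasLinePath.mono {S T : Set N} (hST : S ⊆ T) {j k : N} (h : HasLinePath r S j k) :
    HasLinePath r T j k :=
  let ⟨p, hp, hc⟩ := h
  ⟨p, fun x hx => hST (hp x hx), hc⟩

theorem HasLinePath.cons {S : Set N} {j x k : N} (hx : x ∈ S) (hjx : r j x)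
    (h : HasLinePath r S x k) : HasLinePath r S j k :=
  let ⟨p, hp, hc⟩ := h
  ⟨x :: p, List.forall_mem_cons.mpr ⟨hx, hp⟩, List.IsChain.cons_cons hjx hc⟩

theorem HasLinePath.trans {S : Set N} {j i k : N} (hi : i ∈ S) (hji : HasLinePath r S j i)
    (hik : HasLinePath r S i k) : HasLinePath r S j k := by
  obtain ⟨p, hp, hpc⟩ := hji
  obtain ⟨q, hq, hqc⟩ := hik
  refine ⟨p ++ i :: q, ?_, ?_⟩
  · simpa [or_imp, forall_and] using ⟨hp, hi, hq⟩
  · simpa using List.isChain_cons_split.mpr ⟨hpc, hqc⟩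

theorem HasLinePath.split_insert {S : Set N} {i j k : N} (h : HasLinePath r (insert i S) j k) :
    HasLinePath r S j k ∨ (HasLinePath r S j i ∧ HasLinePath r S i k) := by
  obtain ⟨p, hp, hc⟩ := h
  induction p generalizing j with
  | nil => exact Or.inl (.of_rel (List.isChain_pair.mp hc))
  | cons x p ih =>
    obtain ⟨hjx, hc⟩ := List.isChain_cons_cons.mp hc
    obtain ⟨hx, hp⟩ := List.forall_mem_cons.mp hp
    have hxk := ih hp hc
    rcases hx with rfl | hx
    · exact Or.inr ⟨.of_rel hjx, hxk.elim id And.right⟩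
    · exact hxk.imp (.cons hx hjx) (And.imp_left (.cons hx hjx))

theorem hasLinePath_insert {S : Set N} {i j k : N} :
    HasLinePath r (insert i S) j k ↔
      HasLinePath r S j k ∨ (HasLinePath r S j i ∧ HasLinePath r S i k) := by
  refine ⟨HasLinePath.split_insert, ?_⟩
  have hS : S ⊆ insert i S := Set.subset_insert i S
  rintro (h | ⟨hji, hik⟩)
  · exact h.mono hS
  · exact (hji.mono hS).trans (Set.mem_insert i S) (hik.mono hS)

end LinePath

theorem zerList_eq_true_iff {N : Type} (F : N → N → Bool) (l : List N) (j k : N) :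
    zerList l F j k = true ↔ HasLinePath (fun x y => F x y = true) {x | x ∈ l} j k := by
  induction l generalizing j k with
  | nil =>
    have hl : {x | x ∈ ([] : List N)} = ∅ := by ext; simp
    rw [hl, hasLinePath_empty]
    rfl
  | cons i l ih =>
    have hl : {x | x ∈ i :: l} = insert i {x | x ∈ l} := by ext; simp
    change zerStep i (zerList l F) j k = true ↔ _
    simp only [zerStep, Bool.or_eq_true, Bool.and_eq_true, ih, hl, hasLinePath_insert]

theorem zer_closes_a_line_paths_general {N : Type}
    (F : N → N → Bool) (a : Finset N) (i k : N) :
    zerFinset a F i k = true ↔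
      ∃ l : List N, (∀ x ∈ l, x ∈ a) ∧
        List.Chain (fun x y => F x y = true) i (l ++ [k]) := by
  refine (zerList_eq_true_iff F a.toList i k).trans ?_
  simp only [HasLinePath, Set.mem_ofPred_eq, Finset.mem_toList]
  -- `List.Chain r i l` is by definition `List.IsChain r (i :: l)`.
  rfl

/-- **Partial closure closes exactly the `a`-line paths.** For a binary edge matrix `F`
on a finite set `N` (ones on the diagonal), `a ⊆ N` and `i, k ∈ N`:
`(zer_a F)_{ik} = 1` iff there are `m ≥ 1` and nodes `i = j₀, j₁, ..., jₘ = k` with all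
inner nodes `j₁, ..., j_{m−1}` in `a` and `F_{j_{t−1} j_t} = 1` for `t = 1, ..., m`
(here the inner nodes are the entries of the list `l`). -/
theorem zer_closes_a_line_paths {N : Type} [Fintype N] [DecidableEq N]
    (F : N → N → Bool) (hF : ∀ i, F i i = true) (a : Finset N) (i k : N) :
    zerFinset a F i k = true ↔
      ∃ l : List N, (∀ x ∈ l, x ∈ a) ∧
        List.Chain (fun x y => F x y = true) i (l ++ [k]) :=
  zer_closes_a_line_paths_general F a i k
end

section
/- Let the finite index set N be partitioned into disjoint sets a and b. Let H be an N × N real matrix that is block upper-triangular with respect to (a, b) (H_{ba} = 0) with H_{aa} and H_{bb} invertible, and let W be an N × N real symmetric positive definite matrix. Define Σ := H^{-1} W H^{-T}, and set K_{aa} := H_{aa}^{-1}, K_{ab} := −H_{aa}^{-1} H_{ab}, Q_{aa} := W_{aa} − W_{ab} W_{bb}^{-1} W_{ba}, Q_{ab} := W_{ab} W_{bb}^{-1}, Q_{bb} := W_{bb}^{-1}. Then the following three matrix identities hold: (1) Σ_{ab} (Σ_{bb})^{-1} = K_{ab} + K_{aa} Q_{ab} H_{bb}; (2) Σ_{aa}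 − Σ_{ab} (Σ_{bb})^{-1} Σ_{ba} = K_{aa} Q_{aa} K_{aa}^{T}; (3) (Σ_{bb})^{-1} = H_{bb}^{T} Q_{bb} H_{bb}. (In the Gaussian interpretation with H Y = η and cov(η) = W, these give respectively the regression coefficient matrix Π_{a|b} of Y_a on Y_b, the conditional covariance matrix Σ_{aa|b}, and the marginal concentration matrix Σ^{bb.a} of Y_b.) -/
/-!
`H⁻¹` is again block upper-triangular, with diagonal blocks `E = H_{aa}⁻¹`, `G = H_{bb}⁻¹` and
corner `F = -H_{aa}⁻¹ H_{ab} H_{bb}⁻¹`, so `Σ` is the congruence of `W` by such a matrix. Under a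
congruence `Σ = M W Mᵀ` by `M = [[E, F], [0, G]]` one has `Σ_{bb} = G W_{bb} Gᵀ`, the regression
coefficient becomes `(E W_{ab} W_{bb}⁻¹ + F) G⁻¹`, and the Schur complement of `Σ_{bb}` becomes
`E (W_{aa} - W_{ab} W_{bb}⁻¹ W_{ba}) Eᵀ`.
-/

open Matrix

section BlockUpperCongruence

variable {α : Type*} [CommRing α] {m n : Type*} [Fintype m] [Fintype n]
  (E : Matrix m m α) (F : Matrix m n α) (G : Matrix n n α) (W : Matrix (m ⊕ n) (m ⊕ n) α)

theorem fromBlocks_zero₂₁_mul_mul_transpose :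
    fromBlocks E F 0 G * W * (fromBlocks E F 0 G)ᵀ =
      fromBlocks
        ((E * W.toBlocks₁₁ + F * W.toBlocks₂₁) * Eᵀ + (E * W.toBlocks₁₂ + F * W.toBlocks₂₂) * Fᵀ)
        ((E * W.toBlocks₁₂ + F * W.toBlocks₂₂) * Gᵀ)
        (G * W.toBlocks₂₁ * Eᵀ + G * W.toBlocks₂₂ * Fᵀ)
        (G * W.toBlocks₂₂ * Gᵀ) := by
  conv_lhs => rw [← fromBlocks_toBlocks W]
  simp only [fromBlocks_transpose, fromBlocks_multiply, transpose_zero, Matrix.zero_mul,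
    Matrix.mul_zero, zero_add]

variable {E F G W} [DecidableEq n] {S : Matrix (m ⊕ n) (m ⊕ n) α}

theorem toBlocks₂₂_inv_of_eq_fromBlocks_zero₂₁_conj
    (hS : S = fromBlocks E F 0 G * W * (fromBlocks E F 0 G)ᵀ) :
    S.toBlocks₂₂⁻¹ = Gᵀ⁻¹ * W.toBlocks₂₂⁻¹ * G⁻¹ := by
  rw [hS, fromBlocks_zero₂₁_mul_mul_transpose, toBlocks_fromBlocks₂₂, Matrix.mul_inv_rev,
    Matrix.mul_inv_rev, Matrix.mul_assoc]

theorem regression_of_eq_fromBlocks_zero₂₁_conj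
    (hS : S = fromBlocks E F 0 G * W * (fromBlocks E F 0 G)ᵀ)
    (hG : IsUnit G.det) (hW : IsUnit W.toBlocks₂₂.det) :
    S.toBlocks₁₂ * S.toBlocks₂₂⁻¹ = (E * W.toBlocks₁₂ * W.toBlocks₂₂⁻¹ + F) * G⁻¹ := by
  have hGt : IsUnit Gᵀ.det := by rwa [det_transpose]
  rw [toBlocks₂₂_inv_of_eq_fromBlocks_zero₂₁_conj hS, hS, fromBlocks_zero₂₁_mul_mul_transpose,
    toBlocks_fromBlocks₁₂]
  simp only [Matrix.add_mul, Matrix.mul_assoc, mul_nonsing_inv_cancel_left _ _ hGt,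
    mul_nonsing_inv_cancel_left _ _ hW]

theorem schur_of_eq_fromBlocks_zero₂₁_conj
    (hS : S = fromBlocks E F 0 G * W * (fromBlocks E F 0 G)ᵀ)
    (hG : IsUnit G.det) (hW : IsUnit W.toBlocks₂₂.det) :
    S.toBlocks₁₁ - S.toBlocks₁₂ * S.toBlocks₂₂⁻¹ * S.toBlocks₂₁ =
      E * (W.toBlocks₁₁ - W.toBlocks₁₂ * W.toBlocks₂₂⁻¹ * W.toBlocks₂₁) * Eᵀ := by
  rw [regression_of_eq_fromBlocks_zero₂₁_conj hS hG hW, hS, fromBlocks_zero₂₁_mul_mul_transpose,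
    toBlocks_fromBlocks₁₁, toBlocks_fromBlocks₂₁]
  simp only [Matrix.mul_add, Matrix.add_mul, Matrix.sub_mul, Matrix.mul_sub, Matrix.mul_assoc,
    nonsing_inv_mul_cancel_left _ _ hG, nonsing_inv_mul_cancel_left _ _ hW]
  abel

end BlockUpperCongruence

/-- **Orthogonalised linear equations** (Wermuth and Cox, 2004, Thm 1).
Let the index set be partitioned into `a ⊕ b`, let `H` be block upper-triangular
(`H_{ba} = 0`) with invertible diagonal blocks, `W` symmetric positive definite, and
`Σ := H⁻¹ W H⁻ᵀ`. With `K_{aa} := H_{aa}⁻¹`, `K_{ab} := −H_{aa}⁻¹ H_{ab}`,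
`Q_{aa} := W_{aa} − W_{ab} W_{bb}⁻¹ W_{ba}`, `Q_{ab} := W_{ab} W_{bb}⁻¹`,
`Q_{bb} := W_{bb}⁻¹`, the following identities hold:
(1) the regression coefficient matrix `Π_{a|b} = Σ_{ab} Σ_{bb}⁻¹ = K_{ab} + K_{aa} Q_{ab} H_{bb}`;
(2) the conditional covariance matrix
`Σ_{aa|b} = Σ_{aa} − Σ_{ab} Σ_{bb}⁻¹ Σ_{ba} = K_{aa} Q_{aa} K_{aa}ᵀ`;
(3) the marginal concentration matrix `Σ^{bb.a} = Σ_{bb}⁻¹ = H_{bb}ᵀ Q_{bb} H_{bb}`. -/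
theorem orthogonalised_linear_equations
    {a b : Type} [Fintype a] [Fintype b] [DecidableEq a] [DecidableEq b]
    (H W S : Matrix (a ⊕ b) (a ⊕ b) ℝ)
    (hH21 : H.toBlocks₂₁ = 0)
    (h11 : IsUnit (H.toBlocks₁₁).det)
    (h22 : IsUnit (H.toBlocks₂₂).det)
    (hW : W.PosDef)
    (hS : S = H⁻¹ * W * (H⁻¹)ᵀ)
    (Kaa : Matrix a a ℝ) (Kab : Matrix a b ℝ)
    (Qaa : Matrix a a ℝ) (Qab : Matrix a b ℝ) (Qbb : Matrix b b ℝ)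
    (hKaa : Kaa = (H.toBlocks₁₁)⁻¹)
    (hKab : Kab = -((H.toBlocks₁₁)⁻¹ * H.toBlocks₁₂))
    (hQaa : Qaa = W.toBlocks₁₁ - W.toBlocks₁₂ * (W.toBlocks₂₂)⁻¹ * W.toBlocks₂₁)
    (hQab : Qab = W.toBlocks₁₂ * (W.toBlocks₂₂)⁻¹)
    (hQbb : Qbb = (W.toBlocks₂₂)⁻¹) :
    S.toBlocks₁₂ * (S.toBlocks₂₂)⁻¹ = Kab + Kaa * Qab * H.toBlocks₂₂ ∧
    S.toBlocks₁₁ - S.toBlocks₁₂ * (S.toBlocks₂₂)⁻¹ * S.toBlocks₂₁ = Kaa * Qaa * Kaaᵀ ∧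
    (S.toBlocks₂₂)⁻¹ = (H.toBlocks₂₂)ᵀ * Qbb * H.toBlocks₂₂ := by
  set A := H.toBlocks₁₁
  set D := H.toBlocks₂₂
  have hDinv : IsUnit D⁻¹.det := isUnit_nonsing_inv_det_iff.mpr h22
  have hW22 : IsUnit W.toBlocks₂₂.det := (hW.submatrix Sum.inr_injective).det_pos.ne'.isUnit
  have hHinv : H⁻¹ = fromBlocks A⁻¹ (-(A⁻¹ * H.toBlocks₁₂ * D⁻¹)) 0 D⁻¹ := by
    conv_lhs => rw [← fromBlocks_toBlocks H, hH21]
    exact inv_fromBlocks_zero₂₁_of_isUnit_iff _ _ _ <| by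
      simp only [← isUnit_iff_isUnit_det] at h11 h22; exact iff_of_true h11 h22
  rw [hHinv] at hS
  refine ⟨?_, ?_, ?_⟩
  · rw [regression_of_eq_fromBlocks_zero₂₁_conj hS hDinv hW22, nonsing_inv_nonsing_inv D h22,
      hKab, hKaa, hQab]
    simp only [Matrix.add_mul, Matrix.neg_mul, Matrix.mul_assoc, nonsing_inv_mul _ h22,
      Matrix.mul_one]
    abel
  · rw [schur_of_eq_fromBlocks_zero₂₁_conj hS hDinv hW22, hKaa, hQaa]
  · rw [toBlocks₂₂_inv_of_eq_fromBlocks_zero₂₁_conj hS, ← transpose_nonsing_inv,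
      nonsing_inv_nonsing_inv D h22, hQbb]
end
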